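/- arXiv:1807.03995 — 5 statements merged into one kernel-verified Lean document; each statement's English description precedes it below -/
import Mathlib

section
/- Let G be a function on counting vectors that is additive under concatenation, symmetric, and has the property that G[P] = G[Q] whenever the multisets of entries of P and Q that are strictly less than 1 coincide (for P, Q ∈ W_N, any N). Then G is additively separable: there exists a function g on [0,∞) such that G[P] = Σᵢ g(pᵢ) for all counting vectors P. Explicitly one may take g(x) = G(x, 2−x) − G(1) for x ∈ [0,1] and g(x) = G(1) for x > 1. -/
/-- A counting vector of dimension `N`: nonnegative entries summing to `N`. -/
def IsCountingVector {N : ℕ} (P : Fin N → ℝ) : Prop :=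
  (∀ i, 0 ≤ P i) ∧ ∑ i, P i = N

/-- The multiset of entries of `P` that are strictly less than 1. -/
noncomputable def entriesLtOne {N : ℕ} (P : Fin N → ℝ) : Multiset ℝ :=
  (Finset.univ.val.map P).filter (fun x => x < 1)

lemma map_univ_eq_sum {n : ℕ} (f : Fin n → ℝ) :
    Finset.univ.val.map f = ∑ i, ({f i} : Multiset ℝ) := by
  rw [Finset.sum]
  rw [show (fun i => ({f i} : Multiset ℝ)) = (fun a => ({a} : Multiset ℝ)) ∘ f from rfl]
  rw [← Multiset.map_map, Multiset.sum_map_singleton]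

lemma entriesLtOne_append {N M : ℕ} (P : Fin N → ℝ) (Q : Fin M → ℝ) :
    entriesLtOne (Fin.append P Q) = entriesLtOne P + entriesLtOne Q := by
  unfold entriesLtOne
  rw [map_univ_eq_sum, map_univ_eq_sum, map_univ_eq_sum, Fin.sum_univ_add]
  simp only [Fin.append_left, Fin.append_right]
  rw [Multiset.filter_add]

lemma filter_map_congr {N : ℕ} (P Q : Fin N → ℝ) (s : Multiset (Fin N))
    (h : ∀ i ∈ s, (P i < 1 ∨ Q i < 1) → P i = Q i) :
    (s.map P).filter (fun x => x < 1) = (s.map Q).filter (fun x => x < 1) := by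
  induction s using Multiset.induction with
  | empty => simp
  | cons a s ih =>
    simp only [Multiset.map_cons, Multiset.filter_cons]
    rw [ih (fun i hi => h i (Multiset.mem_cons_of_mem hi))]
    by_cases hP : P a < 1
    · rw [h a (Multiset.mem_cons_self a s) (Or.inl hP)]
    · by_cases hQ : Q a < 1
      · exact absurd (h a (Multiset.mem_cons_self a s) (Or.inr hQ) ▸ hQ) hP
      · simp [hP, hQ]

lemma entriesLtOne_pair (a b : ℝ) (ha : a < 1) (hb : ¬ b < 1) :
    entriesLtOne ![a, b] = {a} := by
  unfold entriesLtOne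
  rw [map_univ_eq_sum, Fin.sum_univ_two]
  simp [Multiset.filter_add, Multiset.filter_singleton, ha, hb]

lemma entriesLtOne_pair' (a b : ℝ) (ha : ¬ a < 1) (hb : ¬ b < 1) :
    entriesLtOne ![a, b] = 0 := by
  unfold entriesLtOne
  rw [map_univ_eq_sum, Fin.sum_univ_two]
  simp [Multiset.filter_add, Multiset.filter_singleton, ha, hb]

lemma entriesLtOne_of_ge {N : ℕ} (P : Fin N → ℝ) (h : ∀ i, ¬ P i < 1) :
    entriesLtOne P = 0 := by
  unfold entriesLtOne
  rw [Multiset.filter_eq_nil]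
  intro a hm
  obtain ⟨i, _, rfl⟩ := Multiset.mem_map.mp hm
  exact h i

lemma entriesLtOne_cons {N : ℕ} (P Q : Fin N → ℝ) (i₀ : Fin N)
    (hP : P i₀ < 1) (hQ : ¬ Q i₀ < 1)
    (h : ∀ i, i ≠ i₀ → (P i < 1 ∨ Q i < 1) → P i = Q i) :
    entriesLtOne P = P i₀ ::ₘ entriesLtOne Q := by
  unfold entriesLtOne
  have huniv : (Finset.univ : Finset (Fin N)).val = i₀ ::ₘ ((Finset.univ.erase i₀).val) := by
    rw [Finset.erase_val, Multiset.cons_erase (Finset.mem_univ_val i₀)]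
  rw [huniv]
  simp only [Multiset.map_cons, Multiset.filter_cons]
  rw [if_pos hP, if_neg hQ]
  rw [filter_map_congr P Q _ (fun i hi => h i (Finset.mem_erase.mp (Finset.mem_val.mp hi)).1)]
  simp

lemma cv_ones (M : ℕ) : IsCountingVector (fun _ : Fin M => (1:ℝ)) := by
  refine ⟨fun _ => zero_le_one, ?_⟩
  simp

lemma cv_pair (x : ℝ) (h0 : 0 ≤ x) (h2 : x ≤ 2) : IsCountingVector ![x, 2 - x] := by
  constructor
  · intro i
    fin_cases i
    · simpa using h0
    · show (0:ℝ) ≤ 2 - x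
      linarith
  · rw [Fin.sum_univ_two]
    norm_num

lemma cv_append {N M : ℕ} (P : Fin N → ℝ) (Q : Fin M → ℝ)
    (hP : IsCountingVector P) (hQ : IsCountingVector Q) :
    IsCountingVector (Fin.append P Q) := by
  constructor
  · intro i
    induction i using Fin.addCases with
    | left i => simpa using hP.1 i
    | right i => simpa using hQ.1 i
  · rw [Fin.sum_univ_add]
    simp only [Fin.append_left, Fin.append_right, hP.2, hQ.2]
    push_cast; ring

theorem separability_lemma (G : ∀ N : ℕ, (Fin N → ℝ) → ℝ)
    -- (A) additivity under concatenation
    (hA : ∀ (N M : ℕ) (P : Fin N → ℝ) (Q : Fin M → ℝ),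
      IsCountingVector P → IsCountingVector Q →
      G (N + M) (Fin.append P Q) = G N P + G M Q)
    -- (S) symmetry under permutations
    (hS : ∀ (N : ℕ) (P : Fin N → ℝ), IsCountingVector P →
      ∀ σ : Equiv.Perm (Fin N), G N (P ∘ σ) = G N P)
    -- property (<): G depends only on the multiset of entries < 1
    (hlt : ∀ (N : ℕ) (P Q : Fin N → ℝ), IsCountingVector P → IsCountingVector Q →
      entriesLtOne P = entriesLtOne Q → G N P = G N Q) :
    -- G is additively separable, with the explicit generating function
    ∃ g : ℝ → ℝ,
      (∀ (N : ℕ) (P : Fin N → ℝ), IsCountingVector P → G N P = ∑ i, g (P i)) ∧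
      (∀ x ∈ Set.Icc (0 : ℝ) 1, g x = G 2 ![x, 2 - x] - G 1 (fun _ => 1)) ∧
      (∀ x : ℝ, 1 < x → g x = G 1 (fun _ => 1)) := by
  classical
  set c : ℝ := G 1 (fun _ => 1) with hc
  -- G of the empty vector is 0
  have hG0 : ∀ f : Fin 0 → ℝ, G 0 f = 0 := by
    intro f
    have hcv : IsCountingVector f := ⟨fun i => i.elim0, by simp⟩
    have he : Fin.append f f = f := funext fun i => i.elim0
    have h : G 0 f = G 0 f + G 0 f := by
      have h0 := hA 0 0 f f hcv hcv
      rw [he] at h0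
      exact h0
    linarith
  -- G of a vector of ones
  have hG1 : ∀ M : ℕ, G M (fun _ => 1) = M * c := by
    intro M
    induction M with
    | zero => simpa using hG0 _
    | succ M ih =>
      have he : Fin.append (fun _ : Fin M => (1:ℝ)) (fun _ : Fin 1 => (1:ℝ)) = fun _ => 1 := by
        funext i
        induction i using Fin.addCases <;> simp
      have h := hA M 1 (fun _ => 1) (fun _ => 1) (cv_ones M) (cv_ones 1)
      rw [he] at h
      rw [h, ih]
      push_cast; ring
  have h11 : G 2 ![(1:ℝ), 1] = 2 * c := by
    have he : ![(1:ℝ),1] = fun _ : Fin 2 => 1 := by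
      funext i; fin_cases i <;> rfl
    rw [he]
    simpa using hG1 2
  have cv11 : IsCountingVector ![(1:ℝ), 1] := by
    have h := cv_pair 1 zero_le_one one_le_two
    norm_num at h
    exact h
  set g : ℝ → ℝ := fun x => if x < 1 then G 2 ![x, 2 - x] - c else c with hgdef
  have hg_ge : ∀ x : ℝ, ¬ x < 1 → g x = c := by
    intro x hx
    rw [hgdef]
    simp only
    rw [if_neg hx]
  have key : ∀ k : ℕ, ∀ (N : ℕ) (P : Fin N → ℝ), IsCountingVector P →
      (Finset.univ.filter (fun i => P i < 1)).card = k → G N P = ∑ i, g (P i) := by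
    intro k
    induction k with
    | zero =>
      intro N P hP hcard
      have hall : ∀ i, ¬ P i < 1 := by
        intro i hi
        have hmem : i ∈ Finset.univ.filter (fun i => P i < 1) := by simp [hi]
        rw [Finset.card_eq_zero] at hcard
        rw [hcard] at hmem
        exact absurd hmem (Finset.notMem_empty i)
      have h1 : G N P = G N (fun _ => 1) :=
        hlt N P _ hP (cv_ones N) (by
          rw [entriesLtOne_of_ge P hall, entriesLtOne_of_ge _ (fun i => by norm_num)])
      rw [h1, hG1 N]
      rw [Finset.sum_congr rfl (fun i _ => hg_ge (P i) (hall i)), Finset.sum_const,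
        Finset.card_univ, Fintype.card_fin, nsmul_eq_mul]
    | succ k ih =>
      intro N P hP hcard
      obtain ⟨i₀, hi₀mem⟩ := Finset.card_pos.mp
        (by omega : 0 < (Finset.univ.filter (fun i => P i < 1)).card)
      have hx : P i₀ < 1 := (Finset.mem_filter.mp hi₀mem).2
      have hx0 : 0 ≤ P i₀ := hP.1 i₀
      -- there is an entry that is ≥ 1
      have hex : ∃ j, ¬ P j < 1 := by
        by_contra hno
        push_neg at hno
        have hne : (Finset.univ : Finset (Fin N)).Nonempty := ⟨i₀, Finset.mem_univ _⟩
        have hslt := Finset.sum_lt_sum_of_nonempty hne (fun i _ => hno i)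
        rw [hP.2] at hslt
        simp at hslt
      obtain ⟨j₀, hj₀⟩ := hex
      have hij : i₀ ≠ j₀ := fun h => hj₀ (h ▸ hx)
      -- the modified vector Q
      set Q₀ : Fin N → ℝ := fun i => if P i < 1 ∧ i ≠ i₀ then P i else 1 with hQ₀def
      set t : ℝ := N - ∑ i ∈ Finset.univ.erase j₀, Q₀ i with htdef
      set Q : Fin N → ℝ := Function.update Q₀ j₀ t with hQdef
      have hQ₀le : ∀ i, Q₀ i ≤ 1 := by
        intro i
        show (if P i < 1 ∧ i ≠ i₀ then P i else 1) ≤ 1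
        split
        · exact le_of_lt (by tauto)
        · exact le_refl 1
      have hQ₀0 : ∀ i, 0 ≤ Q₀ i := by
        intro i
        show (0:ℝ) ≤ if P i < 1 ∧ i ≠ i₀ then P i else 1
        split
        · exact hP.1 i
        · exact zero_le_one
      have hN1 : 1 ≤ N := i₀.pos
      have hcarderase : (((Finset.univ : Finset (Fin N)).erase j₀).card : ℝ) = N - 1 := by
        rw [Finset.card_erase_of_mem (Finset.mem_univ _), Finset.card_univ, Fintype.card_fin]
        push_cast [Nat.cast_sub hN1]
        ring
      have hsum_le : ∑ i ∈ Finset.univ.erase j₀, Q₀ i ≤ (N:ℝ) - 1 := by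
        have h := Finset.sum_le_card_nsmul (Finset.univ.erase j₀) Q₀ 1 (fun i _ => hQ₀le i)
        rw [nsmul_eq_mul, mul_one] at h
        rw [← hcarderase]
        exact h
      have ht1 : 1 ≤ t := by
        rw [htdef]
        linarith
      have hQsum : ∑ i, Q i = (N:ℝ) := by
        rw [hQdef, Finset.sum_update_of_mem (Finset.mem_univ j₀), htdef,
          Finset.sdiff_singleton_eq_erase]
        ring
      have hQj₀ : Q j₀ = t := Function.update_self j₀ t Q₀
      have hQoff : ∀ i, i ≠ j₀ → Q i = Q₀ i := fun i hi => Function.update_of_ne hi t Q₀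
      have hQi₀ : Q i₀ = 1 := by
        rw [hQoff i₀ hij]
        show (if P i₀ < 1 ∧ i₀ ≠ i₀ then P i₀ else 1) = 1
        simp
      have hQ0 : ∀ i, 0 ≤ Q i := by
        intro i
        by_cases h : i = j₀
        · rw [h, hQj₀]; linarith
        · rw [hQoff i h]; exact hQ₀0 i
      have hQcv : IsCountingVector Q := ⟨hQ0, hQsum⟩
      have hQlt : ∀ i, (Q i < 1 ↔ P i < 1 ∧ i ≠ i₀) := by
        intro i
        by_cases h : i = j₀
        · subst h
          rw [hQj₀]
          constructor
          · intro h'; linarith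
          · intro h'; exact absurd h'.1 hj₀
        · rw [hQoff i h]
          show (if P i < 1 ∧ i ≠ i₀ then P i else 1) < 1 ↔ _
          split
          · rename_i hcond
            exact ⟨fun _ => hcond, fun _ => hcond.1⟩
          · rename_i hcond
            exact ⟨fun h' => absurd h' (lt_irrefl 1), fun h' => absurd h' hcond⟩
      have heq_off : ∀ i, i ≠ i₀ → (P i < 1 ∨ Q i < 1) → P i = Q i := by
        intro i hne hor
        have hPlt : P i < 1 := by
          rcases hor with h | h
          · exact h
          · exact ((hQlt i).1 h).1
        have hij0 : i ≠ j₀ := by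
          rintro rfl
          exact hj₀ hPlt
        rw [hQoff i hij0]
        show P i = if P i < 1 ∧ i ≠ i₀ then P i else 1
        rw [if_pos ⟨hPlt, hne⟩]
      have hcardQ : (Finset.univ.filter (fun i => Q i < 1)).card = k := by
        have hfe : Finset.univ.filter (fun i => Q i < 1)
            = (Finset.univ.filter (fun i => P i < 1)).erase i₀ := by
          ext i
          simp only [Finset.mem_filter, Finset.mem_erase, Finset.mem_univ, true_and]
          rw [hQlt i]
          tauto
        rw [hfe, Finset.card_erase_of_mem hi₀mem, hcard]
        omega
      -- compare the two augmented vectors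
      have heLtP : entriesLtOne P = P i₀ ::ₘ entriesLtOne Q :=
        entriesLtOne_cons P Q i₀ hx (by rw [hQi₀]; exact lt_irrefl 1) heq_off
      have cvpairx : IsCountingVector ![P i₀, 2 - P i₀] := cv_pair (P i₀) hx0 (by linarith)
      have heLt : entriesLtOne (Fin.append P ![(1:ℝ),1])
          = entriesLtOne (Fin.append Q ![P i₀, 2 - P i₀]) := by
        rw [entriesLtOne_append, entriesLtOne_append,
          entriesLtOne_pair' 1 1 (by norm_num) (by norm_num),
          entriesLtOne_pair (P i₀) (2 - P i₀) hx (by simp; linarith), heLtP]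
        rw [add_zero, ← Multiset.singleton_add, add_comm]
      have hGAB : G (N + 2) (Fin.append P ![(1:ℝ),1])
          = G (N + 2) (Fin.append Q ![P i₀, 2 - P i₀]) :=
        hlt (N + 2) _ _ (cv_append P ![(1:ℝ),1] hP cv11) (cv_append Q _ hQcv cvpairx) heLt
      have hGA := hA N 2 P ![(1:ℝ),1] hP cv11
      have hGB := hA N 2 Q ![P i₀, 2 - P i₀] hQcv cvpairx
      have hIH : G N Q = ∑ i, g (Q i) := ih N Q hQcv hcardQ
      have hgx : G 2 ![P i₀, 2 - P i₀] = g (P i₀) + c := by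
        rw [hgdef]
        simp only
        rw [if_pos hx]
        ring
      -- relate the two sums
      have hgQi₀ : g (Q i₀) = c := by
        rw [hQi₀]
        exact hg_ge 1 (lt_irrefl 1)
      have hcong : ∀ i ∈ Finset.univ.erase i₀, g (P i) = g (Q i) := by
        intro i hi
        have hne := (Finset.mem_erase.mp hi).1
        by_cases hpi : P i < 1
        · rw [heq_off i hne (Or.inl hpi)]
        · have hqi : ¬ Q i < 1 := fun h => hpi ((hQlt i).1 h).1
          rw [hg_ge _ hpi, hg_ge _ hqi]
      have h1 : ∑ i, g (P i) = g (P i₀) + ∑ i ∈ Finset.univ.erase i₀, g (P i) :=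
        (Finset.add_sum_erase _ _ (Finset.mem_univ i₀)).symm
      have h2 : ∑ i, g (Q i) = g (Q i₀) + ∑ i ∈ Finset.univ.erase i₀, g (Q i) :=
        (Finset.add_sum_erase _ _ (Finset.mem_univ i₀)).symm
      have h3 : ∑ i ∈ Finset.univ.erase i₀, g (P i) = ∑ i ∈ Finset.univ.erase i₀, g (Q i) :=
        Finset.sum_congr rfl hcong
      rw [hGA, hGB, h11, hgx] at hGAB
      rw [h1, h3]
      rw [hIH, h2, hgQi₀] at hGAB
      linarith
  refine ⟨g, ?_, ?_, ?_⟩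
  · intro N P hP
    exact key _ N P hP rfl
  · intro x hx
    rcases lt_or_eq_of_le hx.2 with h | h
    · rw [hgdef]
      simp only
      rw [if_pos h]
    · subst h
      rw [hg_ge 1 (lt_irrefl 1)]
      have : (2:ℝ) - 1 = 1 := by norm_num
      rw [this, h11]
      ring
  · intro x hx
    exact hg_ge x (not_lt.mpr hx.le)
end

section
/- Every effective co-number function M (i.e., a function on counting vectors satisfying additivity, symmetry, continuity on each W_N, the monotonicity M(...,pᵢ,...,pⱼ,...) ≤ M(...,pᵢ−ε,...,pⱼ+ε,...) for pᵢ ≤ pⱼ and 0 < ε ≤ min(pᵢ, N−pⱼ), and the boundary condition M(N,0,...,0) = N−1) satisfies: M[P] = M[Q] whenever P, Q ∈ W_N have the same multiset of entries strictly less than 1. Consequently M is additively separable. -/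
/-- An effective co-number function (co-ENF): additive under concatenation,
symmetric, continuous on each `W_N`, monotone under cumulation (M⁺), and with
boundary values `M(N,0,...,0) = N − 1`. -/
def IsCoENF (M : ∀ N : ℕ, (Fin N → ℝ) → ℝ) : Prop :=
  -- (A) additivity
  (∀ (N K : ℕ) (P : Fin N → ℝ) (Q : Fin K → ℝ),
    IsCountingVector P → IsCountingVector Q →
    M (N + K) (Fin.append P Q) = M N P + M K Q) ∧
  -- (S) symmetry
  (∀ (N : ℕ) (P : Fin N → ℝ), IsCountingVector P →
    ∀ σ : Equiv.Perm (Fin N), M N (P ∘ σ) = M N P) ∧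
  -- (C) continuity on each W_N
  (∀ N : ℕ, ContinuousOn (M N) {P : Fin N → ℝ | IsCountingVector P}) ∧
  -- (M⁺) cumulation monotonicity
  (∀ (N : ℕ) (P : Fin N → ℝ), IsCountingVector P →
    ∀ i j : Fin N, i ≠ j → P i ≤ P j →
    ∀ ε : ℝ, 0 < ε → ε ≤ P i → ε ≤ N - P j →
      M N P ≤ M N (Function.update (Function.update P i (P i - ε)) j (P j + ε))) ∧
  -- (co-B2) boundary values
  (∀ N : ℕ, M (N + 1) (fun k => if k = 0 then ((N + 1 : ℕ) : ℝ) else 0) = N)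

/-!
By symmetry `M` is a function of the multiset of entries, and by additivity it is additive on
counting multisets, with `M{1} = 0` and `M(K + 1, 0, …, 0) = K`. Cumulation monotonicity,
applied after adding blocks `(K + 1, 0, …, 0)` (or a second copy of the configuration) whose
values are known by additivity, gives both inequalities of the merging rule
`M(a, b, u) = M(a + b - 1, u)` for `a, b ≥ 1`. Merging all entries `≥ 1` into one and then
splitting off the pairs `(2 - x, x)` for the entries `x < 1` gives `M[P] = ∑ m(pᵢ)` with
`m(x) = x - 1` for `x ≥ 1`; as `∑ (pᵢ - 1) = 0`, only the entries below `1` contribute.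
-/

def IsCountingMultiset (s : Multiset ℝ) : Prop :=
  (∀ x ∈ s, 0 ≤ x) ∧ s.sum = Multiset.card s

lemma isCountingMultiset_ofFn_iff {N : ℕ} {P : Fin N → ℝ} :
    IsCountingMultiset ↑(List.ofFn P) ↔ IsCountingVector P := by
  simp [IsCountingMultiset, IsCountingVector, List.sum_ofFn]

lemma isCountingMultiset_cons_iff {x : ℝ} {s : Multiset ℝ} :
    IsCountingMultiset (x ::ₘ s) ↔
      0 ≤ x ∧ (∀ y ∈ s, 0 ≤ y) ∧ x + s.sum = Multiset.card s + 1 := by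
  simp [IsCountingMultiset, and_assoc]

lemma isCountingMultiset_zero : IsCountingMultiset 0 := by
  simp [IsCountingMultiset]

lemma isCountingMultiset_singleton_one : IsCountingMultiset {1} := by
  simp [IsCountingMultiset]

lemma isCountingMultiset_block (K : ℕ) :
    IsCountingMultiset (((K : ℝ) + 1) ::ₘ Multiset.replicate K 0) := by
  simp only [isCountingMultiset_cons_iff, Multiset.sum_replicate, nsmul_zero, add_zero,
    Multiset.card_replicate, and_true]
  exact ⟨by positivity, fun y hy => (Multiset.eq_of_mem_replicate hy).ge⟩

namespace IsCountingMultiset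

lemma add {s t : Multiset ℝ} (hs : IsCountingMultiset s) (ht : IsCountingMultiset t) :
    IsCountingMultiset (s + t) :=
  ⟨fun x hx => (Multiset.mem_add.1 hx).elim (hs.1 x) (ht.1 x), by simp [hs.2, ht.2]⟩

lemma one_le_of_forall_le_one {x : ℝ} {w : Multiset ℝ} (h : IsCountingMultiset (x ::ₘ w))
    (hw : ∀ z ∈ w, z ≤ 1) : 1 ≤ x := by
  have hsum := h.2
  have hw := Multiset.sum_le_card_nsmul w 1 hw
  simp only [Multiset.sum_cons, Multiset.card_cons, nsmul_eq_mul, mul_one] at hsum hw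
  push_cast at hsum
  linarith

lemma exists_one_le {s : Multiset ℝ} (hs : IsCountingMultiset s) (hne : s ≠ 0) :
    ∃ y ∈ s, 1 ≤ y := by
  by_contra! hlt
  obtain ⟨a, ha⟩ := Multiset.exists_mem_of_ne_zero hne
  obtain ⟨t, rfl⟩ := Multiset.exists_cons_of_mem ha
  exact (hlt a (Multiset.mem_cons_self a t)).not_ge
    (hs.one_le_of_forall_le_one fun z hz => (hlt z (Multiset.mem_cons_of_mem hz)).le)

lemma merge {a b : ℝ} {u : Multiset ℝ} (h : IsCountingMultiset (a ::ₘ b ::ₘ u))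
    (hab : 1 ≤ a + b) : IsCountingMultiset ((a + b - 1) ::ₘ u) := by
  simp only [isCountingMultiset_cons_iff, Multiset.mem_cons, forall_eq_or_imp,
    Multiset.sum_cons, Multiset.card_cons] at h ⊢
  push_cast at h
  exact ⟨by linarith, h.2.1.2, by linarith⟩

lemma unmerge {a b : ℝ} {u : Multiset ℝ} (h : IsCountingMultiset ((a + b - 1) ::ₘ u))
    (ha : 0 ≤ a) (hb : 0 ≤ b) : IsCountingMultiset (a ::ₘ b ::ₘ u) := by
  simp only [isCountingMultiset_cons_iff, Multiset.mem_cons, forall_eq_or_imp,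
    Multiset.sum_cons, Multiset.card_cons] at h ⊢
  push_cast
  exact ⟨ha, ⟨hb, h.2.1⟩, by linarith⟩

lemma transfer {a b ε : ℝ} {u : Multiset ℝ} (h : IsCountingMultiset (a ::ₘ b ::ₘ u))
    (hε : 0 ≤ ε) (hεa : ε ≤ a) : IsCountingMultiset ((a - ε) ::ₘ (b + ε) ::ₘ u) := by
  simp only [isCountingMultiset_cons_iff, Multiset.mem_cons, forall_eq_or_imp,
    Multiset.sum_cons, Multiset.card_cons] at h ⊢
  exact ⟨by linarith, ⟨by linarith, h.2.1.2⟩, by linarith⟩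

lemma pad {x : ℝ} {s : Multiset ℝ} (h : IsCountingMultiset (x ::ₘ s)) (t : ℕ) :
    IsCountingMultiset ((x + t) ::ₘ (Multiset.replicate t 0 + s)) := by
  simp only [isCountingMultiset_cons_iff, Multiset.mem_add, Multiset.mem_replicate,
    Multiset.sum_add, Multiset.sum_replicate, Multiset.card_add, Multiset.card_replicate] at h ⊢
  refine ⟨add_nonneg h.1 t.cast_nonneg, fun y hy => hy.elim (fun hy => hy.2.ge) (h.2.1 y), ?_⟩
  push_cast
  simp only [smul_zero, zero_add]
  linarith

end IsCountingMultiset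

lemma Multiset.exists_coe_ofFn_eq {α : Type*} (s : Multiset α) :
    ∃ (n : ℕ) (P : Fin n → α), ↑(List.ofFn P) = s :=
  ⟨_, s.toList.get, by rw [List.ofFn_get, Multiset.coe_toList]⟩

lemma apply_eq_of_ofFn_eq {α β : Type*} (F : ∀ n : ℕ, (Fin n → α) → β) {n m : ℕ}
    {P : Fin n → α} {Q : Fin m → α} (h : List.ofFn P = List.ofFn Q) : F n P = F m Q := by
  rw [List.ofFn_inj'] at h
  cases h
  rfl

lemma ofFn_comp_sort_eq_sort {α : Type*} [LinearOrder α] {N : ℕ} (P : Fin N → α) :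
    List.ofFn (P ∘ Tuple.sort P) = (↑(List.ofFn P) : Multiset α).sort (· ≤ ·) := by
  refine List.Perm.eq_of_pairwise' (Tuple.monotone_sort P).sortedLE_ofFn.pairwise
    (Multiset.pairwise_sort _ _) ?_
  rw [← Multiset.coe_eq_coe, Multiset.sort_eq, Multiset.coe_eq_coe]
  exact (Tuple.sort P).ofFn_comp_perm P

-- Symmetry makes the choice of enumeration irrelevant on counting multisets.
noncomputable def onMultiset (M : ∀ N : ℕ, (Fin N → ℝ) → ℝ) (s : Multiset ℝ) : ℝ :=
  M _ (s.sort (· ≤ ·)).get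

-- Entries `≥ 1` are merged and cost `x - 1`; an entry `x < 1` is split off together with
-- `2 - x`, whose cost is `1 - x`.
noncomputable def coENFWeight (M : ∀ N : ℕ, (Fin N → ℝ) → ℝ) (x : ℝ) : ℝ :=
  x - 1 + if x < 1 then onMultiset M {2 - x, x} else 0

lemma coENFWeight_of_one_le (M : ∀ N : ℕ, (Fin N → ℝ) → ℝ) {x : ℝ} (hx : 1 ≤ x) :
    coENFWeight M x = x - 1 := by
  simp [coENFWeight, not_lt.2 hx]

lemma coENFWeight_of_lt_one (M : ∀ N : ℕ, (Fin N → ℝ) → ℝ) {x : ℝ} (hx : x < 1) :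
    coENFWeight M x = x - 1 + onMultiset M {2 - x, x} := by
  simp [coENFWeight, hx]

namespace IsCoENF

variable {M : ∀ N : ℕ, (Fin N → ℝ) → ℝ}

lemma apply_eq_onMultiset (hM : IsCoENF M) {N : ℕ} {P : Fin N → ℝ} (hP : IsCountingVector P) :
    M N P = onMultiset M ↑(List.ofFn P) := by
  rw [← hM.2.1 N P hP (Tuple.sort P), onMultiset]
  apply apply_eq_of_ofFn_eq
  rw [ofFn_comp_sort_eq_sort, List.ofFn_get]

lemma onMultiset_add (hM : IsCoENF M) {s t : Multiset ℝ} (hs : IsCountingMultiset s)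
    (ht : IsCountingMultiset t) : onMultiset M (s + t) = onMultiset M s + onMultiset M t := by
  obtain ⟨n, P, rfl⟩ := s.exists_coe_ofFn_eq
  obtain ⟨k, Q, rfl⟩ := t.exists_coe_ofFn_eq
  rw [isCountingMultiset_ofFn_iff] at hs ht
  have hPQ : IsCountingVector (Fin.append P Q) := by
    rw [← isCountingMultiset_ofFn_iff, List.ofFn_fin_append, ← Multiset.coe_add]
    exact (isCountingMultiset_ofFn_iff.2 hs).add (isCountingMultiset_ofFn_iff.2 ht)
  rw [← hM.apply_eq_onMultiset hs, ← hM.apply_eq_onMultiset ht, Multiset.coe_add,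
    ← List.ofFn_fin_append, ← hM.apply_eq_onMultiset hPQ, hM.1 n k P Q hs ht]

lemma onMultiset_zero (hM : IsCoENF M) : onMultiset M 0 = 0 := by
  simpa using hM.onMultiset_add isCountingMultiset_zero isCountingMultiset_zero

lemma onMultiset_block (hM : IsCoENF M) (K : ℕ) :
    onMultiset M (((K : ℝ) + 1) ::ₘ Multiset.replicate K 0) = K := by
  have hofFn : List.ofFn (fun k : Fin (K + 1) => if k = 0 then ((K + 1 : ℕ) : ℝ) else 0) =
      ((K : ℝ) + 1) :: List.replicate K 0 := by
    simp [List.ofFn_succ, Fin.succ_ne_zero, List.ofFn_const]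
  have hP : IsCountingVector (fun k : Fin (K + 1) => if k = 0 then ((K + 1 : ℕ) : ℝ) else 0) := by
    rw [← isCountingMultiset_ofFn_iff, hofFn]
    exact isCountingMultiset_block K
  have hB := hM.2.2.2.2 K
  rwa [hM.apply_eq_onMultiset hP, hofFn] at hB

lemma onMultiset_singleton_one (hM : IsCoENF M) : onMultiset M {1} = 0 := by
  simpa using hM.onMultiset_block 0

lemma onMultiset_cons_one (hM : IsCoENF M) {s : Multiset ℝ} (hs : IsCountingMultiset s) :
    onMultiset M (1 ::ₘ s) = onMultiset M s := by
  rw [← Multiset.singleton_add, hM.onMultiset_add isCountingMultiset_singleton_one hs,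
    hM.onMultiset_singleton_one, zero_add]

lemma onMultiset_le_transfer (hM : IsCoENF M) {a b ε : ℝ} {u : Multiset ℝ}
    (h : IsCountingMultiset (a ::ₘ b ::ₘ u)) (hab : a ≤ b) (hε : 0 ≤ ε) (hεa : ε ≤ a) :
    onMultiset M (a ::ₘ b ::ₘ u) ≤ onMultiset M ((a - ε) ::ₘ (b + ε) ::ₘ u) := by
  rcases hε.eq_or_lt with rfl | hε
  · simp
  obtain ⟨n, Q, rfl⟩ := u.exists_coe_ofFn_eq
  have hofFn (x y : ℝ) : ((List.ofFn (Fin.cons x (Fin.cons y Q : Fin (n + 1) → ℝ)) : List ℝ) :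
      Multiset ℝ) = x ::ₘ y ::ₘ ↑(List.ofFn Q) := by
    simp [List.ofFn_succ]
  have hP := h
  rw [← hofFn, isCountingMultiset_ofFn_iff] at hP
  have hP' := h.transfer hε.le hεa
  rw [← hofFn, isCountingMultiset_ofFn_iff] at hP'
  have hN : ε ≤ ((n + 1 + 1 : ℕ) : ℝ) - b := by
    have hQ : 0 ≤ ∑ i, Q i := Finset.sum_nonneg fun i _ => by simpa using hP.1 i.succ.succ
    have hsum := hP.2
    simp only [Fin.sum_cons] at hsum
    linarith
  have key := hM.2.2.2.1 _ _ hP 0 1 (by simp) hab ε hε hεa hN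
  have hupdate : Function.update (Function.update (Fin.cons a (Fin.cons b Q) :
      Fin (n + 1 + 1) → ℝ) 0 (a - ε)) 1 (b + ε) = Fin.cons (a - ε) (Fin.cons (b + ε) Q) := by
    rw [Fin.update_cons_zero, ← Fin.succ_zero_eq_one, ← Fin.cons_update, Fin.update_cons_zero]
  simp only [Fin.cons_zero, Fin.cons_one] at key
  rwa [hupdate, hM.apply_eq_onMultiset hP, hM.apply_eq_onMultiset hP', hofFn, hofFn] at key

lemma onMultiset_le_merge (hM : IsCoENF M) {a b : ℝ} {u : Multiset ℝ} (ha : 1 ≤ a) (hb : 1 ≤ b)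
    (h : IsCountingMultiset (a ::ₘ b ::ₘ u)) :
    onMultiset M (a ::ₘ b ::ₘ u) ≤ onMultiset M ((a + b - 1) ::ₘ u) := by
  wlog hab : a ≤ b generalizing a b
  · rw [Multiset.cons_swap, add_comm]
    exact this hb ha (by rwa [Multiset.cons_swap]) (le_of_not_ge hab)
  have key := hM.onMultiset_le_transfer h hab (sub_nonneg.2 ha) (sub_le_self a zero_le_one)
  rwa [sub_sub_cancel, show b + (a - 1) = a + b - 1 by ring,
    hM.onMultiset_cons_one (h.merge (by linarith))] at key

lemma onMultiset_pad (hM : IsCoENF M) {x : ℝ} {s : Multiset ℝ} (hx : 1 ≤ x)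
    (h : IsCountingMultiset (x ::ₘ s)) (t : ℕ) :
    onMultiset M ((x + t) ::ₘ (Multiset.replicate t 0 + s)) = onMultiset M (x ::ₘ s) + t := by
  have hlower : onMultiset M (x ::ₘ s) + t ≤
      onMultiset M ((x + t) ::ₘ (Multiset.replicate t 0 + s)) := by
    have e : (x ::ₘ s) + (((t : ℝ) + 1) ::ₘ Multiset.replicate t 0) =
        x ::ₘ ((t : ℝ) + 1) ::ₘ (Multiset.replicate t 0 + s) := by
      simp only [← Multiset.singleton_add]; abel
    have hcount := h.add (isCountingMultiset_block t)
    rw [e] at hcount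
    calc onMultiset M (x ::ₘ s) + t
        = onMultiset M (x ::ₘ ((t : ℝ) + 1) ::ₘ (Multiset.replicate t 0 + s)) := by
          rw [← e, hM.onMultiset_add h (isCountingMultiset_block t), hM.onMultiset_block]
      _ ≤ onMultiset M ((x + ((t : ℝ) + 1) - 1) ::ₘ (Multiset.replicate t 0 + s)) :=
          hM.onMultiset_le_merge hx (by simp) hcount
      _ = onMultiset M ((x + t) ::ₘ (Multiset.replicate t 0 + s)) := by ring_nf
  obtain ⟨K, hxK⟩ : ∃ K : ℕ, x + t ≤ K + 1 :=
    ⟨⌈x⌉₊ + t, by push_cast; linarith [Nat.le_ceil x]⟩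
  have hupper : onMultiset M ((x + t) ::ₘ (Multiset.replicate t 0 + s)) + K ≤
      onMultiset M (x ::ₘ s) + (K + t) := by
    have hpad := h.pad t
    have e : ((x + t) ::ₘ (Multiset.replicate t 0 + s)) +
        (((K : ℝ) + 1) ::ₘ Multiset.replicate K 0) =
        (x + t) ::ₘ ((K : ℝ) + 1) ::ₘ (Multiset.replicate t 0 + Multiset.replicate K 0 + s) := by
      simp only [← Multiset.singleton_add]; abel
    have e' : (x + t - t) ::ₘ ((K : ℝ) + 1 + t) ::ₘ
        (Multiset.replicate t 0 + Multiset.replicate K 0 + s) =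
        (x ::ₘ s) + ((((K + t : ℕ) : ℝ) + 1) ::ₘ Multiset.replicate (K + t) 0) := by
      rw [add_sub_cancel_right, Multiset.replicate_add, Nat.cast_add, add_right_comm (K : ℝ)]
      simp only [← Multiset.singleton_add]
      abel
    have hcount := hpad.add (isCountingMultiset_block K)
    rw [e] at hcount
    calc onMultiset M ((x + t) ::ₘ (Multiset.replicate t 0 + s)) + K
        = onMultiset M ((x + t) ::ₘ ((K : ℝ) + 1) ::ₘ
            (Multiset.replicate t 0 + Multiset.replicate K 0 + s)) := by
          rw [← e, hM.onMultiset_add hpad (isCountingMultiset_block K), hM.onMultiset_block]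
      _ ≤ onMultiset M ((x + t - t) ::ₘ ((K : ℝ) + 1 + t) ::ₘ
            (Multiset.replicate t 0 + Multiset.replicate K 0 + s)) :=
          hM.onMultiset_le_transfer hcount hxK t.cast_nonneg (by linarith)
      _ = onMultiset M (x ::ₘ s) + (K + t) := by
          rw [e', hM.onMultiset_add h (isCountingMultiset_block _), hM.onMultiset_block]
          push_cast
          ring
  linarith

lemma merge_le_onMultiset (hM : IsCoENF M) {a b : ℝ} {u : Multiset ℝ} (ha : 1 ≤ a) (hb : 1 ≤ b)
    (h : IsCountingMultiset (a ::ₘ b ::ₘ u)) :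
    onMultiset M ((a + b - 1) ::ₘ u) ≤ onMultiset M (a ::ₘ b ::ₘ u) := by
  -- Start from two copies of `(c, u)` and a block; two transfers un-merge one copy into
  -- `(a, b, u)` while the other absorbs the block into the padded `(c + t, 0^t, u)`.
  set c := a + b - 1
  have hc : IsCountingMultiset (c ::ₘ u) := h.merge (by linarith)
  obtain ⟨t, hct⟩ : ∃ t : ℕ, c ≤ t := exists_nat_ge c
  set w := c ::ₘ (Multiset.replicate t 0 + (u + u))
  have e₀ : (c ::ₘ u) + (c ::ₘ u) + (((t : ℝ) + 1) ::ₘ Multiset.replicate t 0) =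
      c ::ₘ ((t : ℝ) + 1) ::ₘ w := by
    simp only [w, ← Multiset.singleton_add]; abel
  have e₁ : (c - (a - 1)) ::ₘ ((t : ℝ) + 1 + (a - 1)) ::ₘ w =
      c ::ₘ ((t : ℝ) + a) ::ₘ (b ::ₘ (Multiset.replicate t 0 + (u + u))) := by
    rw [show c - (a - 1) = b by ring, show (t : ℝ) + 1 + (a - 1) = t + a by ring]
    simp only [w, ← Multiset.singleton_add]; abel
  have e₂ : (c - (b - 1)) ::ₘ ((t : ℝ) + a + (b - 1)) ::ₘ
      (b ::ₘ (Multiset.replicate t 0 + (u + u))) =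
      (a ::ₘ b ::ₘ u) + ((c + t) ::ₘ (Multiset.replicate t 0 + u)) := by
    rw [show c - (b - 1) = a by ring, show (t : ℝ) + a + (b - 1) = c + t by ring]
    simp only [← Multiset.singleton_add]; abel
  have hcount₀ := (hc.add hc).add (isCountingMultiset_block t)
  rw [e₀] at hcount₀
  have hcount₁ := hcount₀.transfer (sub_nonneg.2 ha) (by linarith)
  rw [e₁] at hcount₁
  have key : onMultiset M (c ::ₘ u) + onMultiset M (c ::ₘ u) + t ≤
      onMultiset M (a ::ₘ b ::ₘ u) + (onMultiset M (c ::ₘ u) + t) :=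
    calc onMultiset M (c ::ₘ u) + onMultiset M (c ::ₘ u) + t
        = onMultiset M (c ::ₘ ((t : ℝ) + 1) ::ₘ w) := by
          rw [← e₀, hM.onMultiset_add (hc.add hc) (isCountingMultiset_block t),
            hM.onMultiset_add hc hc, hM.onMultiset_block]
      _ ≤ onMultiset M ((c - (a - 1)) ::ₘ ((t : ℝ) + 1 + (a - 1)) ::ₘ w) :=
          hM.onMultiset_le_transfer hcount₀ (by linarith) (sub_nonneg.2 ha) (by linarith)
      _ = onMultiset M (c ::ₘ ((t : ℝ) + a) ::ₘ (b ::ₘ (Multiset.replicate t 0 + (u + u)))) := by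
          rw [e₁]
      _ ≤ onMultiset M ((c - (b - 1)) ::ₘ ((t : ℝ) + a + (b - 1)) ::ₘ
            (b ::ₘ (Multiset.replicate t 0 + (u + u)))) :=
          hM.onMultiset_le_transfer hcount₁ (by linarith) (sub_nonneg.2 hb) (by linarith)
      _ = onMultiset M (a ::ₘ b ::ₘ u) + (onMultiset M (c ::ₘ u) + t) := by
          rw [e₂, hM.onMultiset_add h (hc.pad t), hM.onMultiset_pad (by linarith) hc]
  linarith

lemma onMultiset_merge (hM : IsCoENF M) {a b : ℝ} {u : Multiset ℝ} (ha : 1 ≤ a) (hb : 1 ≤ b)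
    (h : IsCountingMultiset (a ::ₘ b ::ₘ u)) :
    onMultiset M (a ::ₘ b ::ₘ u) = onMultiset M ((a + b - 1) ::ₘ u) :=
  (hM.onMultiset_le_merge ha hb h).antisymm (hM.merge_le_onMultiset ha hb h)

lemma onMultiset_split (hM : IsCoENF M) {x y : ℝ} {w : Multiset ℝ} (hx : x ≤ 1)
    (hxy : 2 ≤ y + x) (h : IsCountingMultiset (y ::ₘ x ::ₘ w)) :
    onMultiset M (y ::ₘ x ::ₘ w) = onMultiset M {2 - x, x} + onMultiset M ((y + x - 1) ::ₘ w) := by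
  have hx₀ : 0 ≤ x := h.1 x (by simp)
  have hpair : IsCountingMultiset {2 - x, x} :=
    isCountingMultiset_cons_iff.2 ⟨by linarith, by simpa using hx₀, by norm_num⟩
  have hrest : IsCountingMultiset ((y + x - 1) ::ₘ w) := h.merge (by linarith)
  have hsplit : IsCountingMultiset ((2 - x) ::ₘ (y + x - 1) ::ₘ x ::ₘ w) :=
    IsCountingMultiset.unmerge (by rwa [show 2 - x + (y + x - 1) - 1 = y by ring])
      (by linarith) (by linarith)
  calc onMultiset M (y ::ₘ x ::ₘ w)
      = onMultiset M ((2 - x + (y + x - 1) - 1) ::ₘ x ::ₘ w) := by ring_nf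
    _ = onMultiset M ((2 - x) ::ₘ (y + x - 1) ::ₘ x ::ₘ w) :=
        (hM.onMultiset_merge (by linarith) (by linarith) hsplit).symm
    _ = onMultiset M ({2 - x, x} + ((y + x - 1) ::ₘ w)) := by
        simp only [Multiset.insert_eq_cons, ← Multiset.singleton_add]; abel_nf
    _ = _ := hM.onMultiset_add hpair hrest

lemma onMultiset_eq_sum_map (hM : IsCoENF M) {s : Multiset ℝ} (hs : IsCountingMultiset s) :
    onMultiset M s = (s.map (coENFWeight M)).sum := by
  induction hn : Multiset.card s using Nat.strong_induction_on generalizing s with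
  | _ n ih =>
  rcases eq_or_ne s 0 with rfl | hne
  · simp [hM.onMultiset_zero]
  obtain ⟨y, hy, hy₁⟩ := hs.exists_one_le hne
  obtain ⟨w, rfl⟩ := Multiset.exists_cons_of_mem hy
  by_cases hbig : ∃ z ∈ w, 1 ≤ z
  · obtain ⟨z, hz, hz₁⟩ := hbig
    obtain ⟨u, rfl⟩ := Multiset.exists_cons_of_mem hz
    rw [hM.onMultiset_merge hy₁ hz₁ hs,
      ih _ (by simp [← hn]) (hs.merge (by linarith)) rfl]
    simp only [Multiset.map_cons, Multiset.sum_cons, coENFWeight_of_one_le M hy₁,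
      coENFWeight_of_one_le M hz₁, coENFWeight_of_one_le M (by linarith : 1 ≤ y + z - 1)]
    ring
  push Not at hbig
  rcases Multiset.empty_or_exists_mem w with rfl | ⟨x, hx⟩
  · have hy : y = 1 := by simpa [IsCountingMultiset] using hs.2
    simp [hy, hM.onMultiset_singleton_one, coENFWeight_of_one_le]
  obtain ⟨w, rfl⟩ := Multiset.exists_cons_of_mem hx
  have hx₁ : x < 1 := hbig x hx
  have hxy : 2 ≤ y + x := by
    have hmerged := hs.merge (by linarith [hs.1 x (by simp)])
    linarith [hmerged.one_le_of_forall_le_one fun z hz => (hbig z (Multiset.mem_cons_of_mem hz)).le]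
  rw [hM.onMultiset_split hx₁.le hxy hs,
    ih _ (by simp [← hn]) (hs.merge (by linarith)) rfl]
  simp only [Multiset.map_cons, Multiset.sum_cons, coENFWeight_of_one_le M hy₁,
    coENFWeight_of_lt_one M hx₁, coENFWeight_of_one_le M (by linarith : 1 ≤ y + x - 1)]
  ring

lemma apply_eq_sum_coENFWeight (hM : IsCoENF M) {N : ℕ} {P : Fin N → ℝ}
    (hP : IsCountingVector P) : M N P = ∑ i, coENFWeight M (P i) := by
  rw [hM.apply_eq_onMultiset hP, hM.onMultiset_eq_sum_map (isCountingMultiset_ofFn_iff.2 hP),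
    Multiset.map_coe, Multiset.sum_coe, List.map_ofFn, List.sum_ofFn]
  rfl

end IsCoENF

lemma sum_coENFWeight_eq (M : ∀ N : ℕ, (Fin N → ℝ) → ℝ) {N : ℕ} {P : Fin N → ℝ}
    (hP : IsCountingVector P) :
    ∑ i, coENFWeight M (P i) = ((entriesLtOne P).map fun x => onMultiset M {2 - x, x}).sum := by
  have hzero : ∑ i, (P i - 1) = 0 := by simp [Finset.sum_sub_distrib, hP.2]
  simp only [coENFWeight, Finset.sum_add_distrib, hzero, zero_add, ← Finset.sum_filter,
    entriesLtOne, Multiset.filter_map]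
  rw [Multiset.map_map, Finset.sum_eq_multiset_sum, Finset.filter_val]
  rfl

theorem coENF_separable (M : ∀ N : ℕ, (Fin N → ℝ) → ℝ) (hM : IsCoENF M) :
    -- M depends only on the multiset of entries strictly less than 1 ...
    (∀ (N : ℕ) (P Q : Fin N → ℝ), IsCountingVector P → IsCountingVector Q →
      entriesLtOne P = entriesLtOne Q → M N P = M N Q) ∧
    -- ... and consequently M is additively separable
    (∃ m : ℝ → ℝ, ∀ (N : ℕ) (P : Fin N → ℝ), IsCountingVector P →
      M N P = ∑ i, m (P i)) := by
  refine ⟨fun N P Q hP hQ hPQ => ?_, coENFWeight M, fun N P hP => hM.apply_eq_sum_coENFWeight hP⟩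
  rw [hM.apply_eq_sum_coENFWeight hP, hM.apply_eq_sum_coENFWeight hQ, sum_coENFWeight_eq M hP,
    sum_coENFWeight_eq M hQ, hPQ]
end

section
/- Let h : [0,∞) → ℝ satisfy Σᵢ h(pᵢ) = 0 for every counting vector (p₁,...,p_N) (all N ≥ 1). If h is bounded on some interval [a,b] with 0 ≤ a < b, then h(p) = (1−p)·h(0) for all p ∈ [0,∞). -/
open Set

lemma exists_nonneg_rat_mem_Icc_sub (p : ℝ) (hp : 0 ≤ p) {ε : ℝ} (hε : 0 < ε) :
    ∃ q : ℚ, 0 ≤ q ∧ (q : ℝ) ∈ Icc (p - ε) p := by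
  obtain ⟨q, hq₁, hq₂⟩ := exists_rat_btwn (show p - ε < p by linarith)
  refine ⟨max q 0, le_max_right _ _, ?_, ?_⟩ <;> push_cast
  · exact hq₁.le.trans (le_max_left _ _)
  · exact max_le hq₂.le hp

def AdditiveOnNonneg (f : ℝ → ℝ) : Prop :=
  ∀ x y, 0 ≤ x → 0 ≤ y → f (x + y) = f x + f y

namespace AdditiveOnNonneg

variable {f : ℝ → ℝ}

lemma map_zero (hf : AdditiveOnNonneg f) : f 0 = 0 := by
  have := hf 0 0 le_rfl le_rfl
  rw [add_zero] at this
  linarith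

lemma map_natCast_mul (hf : AdditiveOnNonneg f) (n : ℕ) {x : ℝ} (hx : 0 ≤ x) :
    f (n * x) = n * f x := by
  induction n with
  | zero => simpa using hf.map_zero
  | succ n ih =>
    push_cast
    rw [add_one_mul, hf _ _ (by positivity) hx, ih]
    ring

lemma map_ratCast (hf : AdditiveOnNonneg f) {q : ℚ} (hq : 0 ≤ q) : f q = q * f 1 := by
  have hnum : ((q.num.toNat : ℕ) : ℝ) = q.den * q := by
    have : (q.num.toNat : ℤ) = q.num := Int.toNat_of_nonneg (Rat.num_nonneg.mpr hq)
    rw [← Int.cast_natCast, this]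
    exact_mod_cast (Rat.den_mul_eq_num q).symm
  have key : (q.den : ℝ) * f q = q.den * q * f 1 := by
    rw [← hf.map_natCast_mul _ (by exact_mod_cast hq), ← hnum,
      ← mul_one ((q.num.toNat : ℕ) : ℝ), hf.map_natCast_mul _ zero_le_one, mul_one]
  have hden : (q.den : ℝ) ≠ 0 := by positivity
  rw [mul_assoc] at key
  exact mul_left_cancel₀ hden key

lemma sub_mul_map_one (hf : AdditiveOnNonneg f) : AdditiveOnNonneg fun x => f x - x * f 1 :=
  fun x y hx hy => by simp only [hf x y hx hy]; ring

lemma abs_le_two_mul_on_Icc_zero_sub {a b C : ℝ} (hf : AdditiveOnNonneg f) (ha : 0 ≤ a)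
    (hab : a ≤ b) (hC : ∀ x ∈ Icc a b, |f x| ≤ C) {t : ℝ} (ht : t ∈ Icc 0 (b - a)) :
    |f t| ≤ 2 * C := by
  have hsplit : f t = f (a + t) - f a := by rw [hf a t ha ht.1]; ring
  rw [hsplit]
  calc |f (a + t) - f a| ≤ |f (a + t)| + |f a| := abs_sub _ _
    _ ≤ C + C :=
      add_le_add (hC _ ⟨by linarith [ht.1], by linarith [ht.2]⟩) (hC a ⟨le_rfl, hab⟩)
    _ = 2 * C := by ring

lemma eq_zero_of_map_one_eq_zero {δ C : ℝ} (hf : AdditiveOnNonneg f) (h1 : f 1 = 0)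
    (hδ : 0 < δ) (hC : ∀ t ∈ Icc 0 δ, |f t| ≤ C) {p : ℝ} (hp : 0 ≤ p) : f p = 0 := by
  -- `f p = f (p - q)` for rationals `q ≤ p`, and `(n + 1) (p - q)` can be put inside `[0, δ]`.
  have hmul : ∀ n : ℕ, (n + 1 : ℝ) * |f p| ≤ C := by
    intro n
    obtain ⟨q, hq0, hpq, hqp⟩ :=
      exists_nonneg_rat_mem_Icc_sub p hp (ε := δ / (n + 1)) (by positivity)
    have hfp : f p = f (p - q) := by
      have := hf q (p - q) (by exact_mod_cast hq0) (by linarith)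
      rwa [add_sub_cancel, hf.map_ratCast hq0, h1, mul_zero, zero_add] at this
    have hmem : ((n + 1 : ℕ) : ℝ) * (p - q) ∈ Icc 0 δ := by
      refine ⟨by push_cast; nlinarith, ?_⟩
      push_cast
      rw [← le_div_iff₀' (by positivity)]
      linarith
    have := hC _ hmem
    rw [hf.map_natCast_mul _ (by linarith), ← hfp, abs_mul, Nat.abs_cast] at this
    exact_mod_cast this
  by_contra hne
  obtain ⟨n, hn⟩ := exists_nat_gt (C / |f p|)
  have hpos : 0 < |f p| := abs_pos.mpr hne
  rw [div_lt_iff₀ hpos] at hn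
  nlinarith [hmul n]

theorem eq_mul_map_one {a b : ℝ} (hf : AdditiveOnNonneg f) (ha : 0 ≤ a) (hab : a < b)
    (hbd : ∃ C, ∀ x ∈ Icc a b, |f x| ≤ C) {x : ℝ} (hx : 0 ≤ x) : f x = x * f 1 := by
  obtain ⟨C, hC⟩ := hbd
  have hg := hf.sub_mul_map_one
  have hgC : ∀ y ∈ Icc a b, |f y - y * f 1| ≤ C + b * |f 1| := fun y hy => by
    have hy0 : 0 ≤ y := ha.trans hy.1
    calc |f y - y * f 1| ≤ |f y| + |y * f 1| := abs_sub _ _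
      _ = |f y| + y * |f 1| := by rw [abs_mul, abs_of_nonneg hy0]
      _ ≤ C + b * |f 1| := add_le_add (hC y hy) (by gcongr; exact hy.2)
  have := hg.eq_zero_of_map_one_eq_zero (by simp) (sub_pos.mpr hab)
    (fun t ht => hg.abs_le_two_mul_on_Icc_zero_sub ha hab.le hgC ht) hx
  linarith

end AdditiveOnNonneg

section CountingVectors

variable {h : ℝ → ℝ}

lemma sum_apply_add_mul_apply_zero
    (hsum : ∀ (N : ℕ) (P : Fin N → ℝ), IsCountingVector P → ∑ i, h (P i) = 0)
    {k : ℕ} (m : ℕ) (v : Fin k → ℝ) (hv : ∀ i, 0 ≤ v i) (hs : ∑ i, v i = m + k) :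
    ∑ i, h (v i) + m * h 0 = 0 := by
  have hP : IsCountingVector (Fin.append v (0 : Fin m → ℝ)) := by
    refine ⟨Fin.addCases (by simpa using hv) (by simp), ?_⟩
    simp [Fin.sum_univ_add, hs, add_comm]
  simpa [Fin.sum_univ_add] using hsum _ _ hP

lemma apply_add_add_apply_zero
    (hsum : ∀ (N : ℕ) (P : Fin N → ℝ), IsCountingVector P → ∑ i, h (P i) = 0)
    {x y : ℝ} (hx : 0 ≤ x) (hy : 0 ≤ y) : h (x + y) + h 0 = h x + h y := by
  obtain ⟨m, hm⟩ := exists_nat_ge (x + y)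
  set r : ℝ := m + 3 - (x + y)
  have hr : 0 ≤ r := by linarith
  have h3 := sum_apply_add_mul_apply_zero hsum m ![x, y, r]
    (by simp [Fin.forall_fin_succ, hx, hy, hr]) (by simp [Fin.sum_univ_three, r])
  have h2 := sum_apply_add_mul_apply_zero hsum (m + 1) ![x + y, r]
    (by simp [Fin.forall_fin_succ, add_nonneg hx hy, hr]) (by simp [Fin.sum_univ_two, r]; ring)
  simp only [Fin.sum_univ_three, Fin.sum_univ_two, Matrix.cons_val] at h2 h3
  push_cast at h2
  linarith

end CountingVectors

theorem null_generating_function_is_linear (h : ℝ → ℝ)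
    (hsum : ∀ (N : ℕ) (P : Fin N → ℝ), IsCountingVector P → ∑ i, h (P i) = 0)
    (a b : ℝ) (ha : 0 ≤ a) (hab : a < b)
    (hbd : ∃ C : ℝ, ∀ p ∈ Set.Icc a b, |h p| ≤ C) :
    ∀ p : ℝ, 0 ≤ p → h p = (1 - p) * h 0 := by
  have hadd : AdditiveOnNonneg fun x => h x - h 0 := fun x y hx hy => by
    linarith [apply_add_add_apply_zero hsum hx hy]
  have hbd' : ∃ C, ∀ x ∈ Icc a b, |h x - h 0| ≤ C := by
    obtain ⟨C, hC⟩ := hbd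
    exact ⟨C + |h 0|, fun x hx => (abs_sub _ _).trans (by linarith [hC x hx])⟩
  have h1 : h 1 = 0 := by
    simpa using hsum 1 (fun _ => 1) ⟨fun _ => zero_le_one, by simp⟩
  intro p hp
  have := hadd.eq_mul_map_one ha hab hbd' hp
  rw [h1] at this
  linarith
end

section
/- For every effective co-number function M and every real number t, there is exactly one continuous generating function m of M with m(0) = t. -/
/-!
The defect `θ(a, b) = M(a, b, R) - M(a + b, 0, R)` does not depend on the padding `R`
(additivity plus symmetry), is continuous, and satisfies the additive 2-cocycle identity on
`[0, ∞)`. Integrating that identity produces a continuous `φ` with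
`θ(a, b) = φ a + φ b - φ (a + b)`, so merging two entries changes `M` and `∑ φ` by the same
amount. Merging everything into `(N, 0, …, 0)`, a counting vector `P` and `(1, …, 1)` get the
same value of `M - ∑ φ`; as `M (1, …, 1) = 0` by additivity, `M = ∑ (φ - φ 1)`. Adding
`K (1 - p)`, which sums to zero on every counting vector, adjusts the value at `0`.

Two continuous generating functions agreeing at `0` differ by a function that is additive on
`[0, ∞)` (compare `(x, y, R)` with `(x + y, 0, R)`) and vanishes at `1`, hence vanishes.
-/

open Set Function intervalIntegral
open MeasureTheory (volume)

theorem exists_comp_perm_eq_of_perm_ofFn {α : Type*} [LinearOrder α] {n : ℕ} {f g : Fin n → α}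
    (h : (List.ofFn f).Perm (List.ofFn g)) : ∃ σ : Equiv.Perm (Fin n), f ∘ σ = g := by
  -- both tuples become the same monotone tuple once sorted
  have hsort : f ∘ Tuple.sort f = g ∘ Tuple.sort g := List.ofFn_injective <|
    List.Perm.eq_of_sortedLE (Tuple.monotone_sort f).sortedLE_ofFn
      (Tuple.monotone_sort g).sortedLE_ofFn
      (((Tuple.sort f).ofFn_comp_perm f).trans (h.trans ((Tuple.sort g).ofFn_comp_perm g).symm))
  refine ⟨(Tuple.sort g).symm.trans (Tuple.sort f), funext fun i => ?_⟩
  simpa using congr_fun hsort ((Tuple.sort g).symm i)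

theorem eq_mul_of_map_add_of_continuousOn {f : ℝ → ℝ} (hf : ContinuousOn f (Ici 0))
    (hadd : ∀ x y, 0 ≤ x → 0 ≤ y → f (x + y) = f x + f y) {x : ℝ} (hx : 0 ≤ x) :
    f x = x * f 1 := by
  have hf0 : f 0 = 0 := by simpa using hadd 0 0 le_rfl le_rfl
  -- extend `f` to an additive map on `ℝ` through `x = max x 0 - max (-x) 0`
  set g : ℝ → ℝ := fun x => f (max x 0) - f (max (-x) 0)
  have hg_add : ∀ x y, g (x + y) = g x + g y := by
    intro x y
    have key : max (x + y) 0 + (max (-x) 0 + max (-y) 0)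
        = max (-(x + y)) 0 + (max x 0 + max y 0) := by
      linarith [max_zero_sub_max_neg_zero_eq_self x, max_zero_sub_max_neg_zero_eq_self y,
        max_zero_sub_max_neg_zero_eq_self (x + y)]
    have := congrArg f key
    simp only [hadd _ _ (le_max_right _ 0) (add_nonneg (le_max_right _ 0) (le_max_right _ 0)),
      hadd _ _ (le_max_right _ 0) (le_max_right _ 0)] at this
    linarith
  have hg : Continuous g := by
    have hmax : Continuous fun x : ℝ => max x 0 := by fun_prop
    exact (hf.comp_continuous hmax fun _ => mem_Ici.2 (le_max_right _ _)).sub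
      (hf.comp_continuous (hmax.comp continuous_neg) fun _ => mem_Ici.2 (le_max_right _ _))
  simpa [g, hx, hf0] using map_real_smul (AddMonoidHom.mk' g hg_add) hg x 1

noncomputable def cocyclePotential (c : ℝ → ℝ → ℝ) (x : ℝ) : ℝ :=
  (∫ s in 0..1, c x s) - ∫ u in 0..x, c u 1

section Cocycle

variable {c : ℝ → ℝ → ℝ} (hc : Continuous (uncurry c))
include hc

theorem continuous_cocyclePotential : Continuous (cocyclePotential c) :=
  (continuous_parametric_intervalIntegral_of_continuous' hc 0 1).sub <|
    continuous_primitive (fun _ _ => Continuous.intervalIntegrable (by fun_prop) _ _) 0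

theorem eq_cocyclePotential_add_sub
    (hcoc : ∀ a b d, 0 ≤ a → 0 ≤ b → 0 ≤ d → c a b + c (a + b) d = c a (b + d) + c b d)
    {a b : ℝ} (ha : 0 ≤ a) (hb : 0 ≤ b) :
    c a b = cocyclePotential c a + cocyclePotential c b - cocyclePotential c (a + b) := by
  -- integrate the cocycle identity in its last variable over `[0, 1]`
  have h₁ : c a b + ∫ s in 0..1, c (a + b) s
      = (∫ u in b..b + 1, c a u) + ∫ s in 0..1, c b s := by
    have := integral_congr (μ := volume) (a := 0) (b := 1) fun s hs =>
      hcoc a b s ha hb (by rw [uIcc_of_le zero_le_one] at hs; exact hs.1)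
    rw [integral_add, integral_add, integral_comp_add_left (c a)] at this
    · simpa using this
    all_goals exact Continuous.intervalIntegrable (by fun_prop) _ _
  -- integrate the cocycle identity in its middle variable over `[0, b]`
  have h₂ : (∫ u in 0..b, c a u) + ∫ v in a..a + b, c v 1
      = (∫ u in 1..b + 1, c a u) + ∫ u in 0..b, c u 1 := by
    have := integral_congr (μ := volume) (a := 0) (b := b) fun u hu =>
      hcoc a u 1 ha (by rw [uIcc_of_le hb] at hu; exact hu.1) zero_le_one
    rw [integral_add, integral_add, integral_comp_add_left (c · 1),
      integral_comp_add_right (c a)] at this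
    · simpa using this
    all_goals exact Continuous.intervalIntegrable (by fun_prop) _ _
  have hca : ∀ x y, IntervalIntegrable (c a) volume x y :=
    Continuous.intervalIntegrable (by fun_prop)
  have hc1 : ∀ x y, IntervalIntegrable (c · 1) volume x y :=
    Continuous.intervalIntegrable (by fun_prop)
  rw [← integral_interval_sub_left (hca 0 (b + 1)) (hca 0 b)] at h₁
  rw [← integral_interval_sub_left (hca 0 (b + 1)) (hca 0 1),
    ← integral_interval_sub_left (hc1 0 (a + b)) (hc1 0 a)] at h₂
  unfold cocyclePotential
  linarith

end Cocycle

namespace CoENF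

def IsCountingList (l : List ℝ) : Prop :=
  (∀ x ∈ l, 0 ≤ x) ∧ l.sum = l.length

theorem isCountingList_ofFn {n : ℕ} {P : Fin n → ℝ} :
    IsCountingList (List.ofFn P) ↔ IsCountingVector P := by
  simp [IsCountingList, IsCountingVector, List.sum_ofFn]

theorem isCountingList_nil : IsCountingList [] := by simp [IsCountingList]

namespace IsCountingList

variable {l l₁ l₂ : List ℝ}

theorem append (h₁ : IsCountingList l₁) (h₂ : IsCountingList l₂) : IsCountingList (l₁ ++ l₂) :=
  ⟨fun x hx => (List.mem_append.1 hx).elim (h₁.1 x) (h₂.1 x), by simp [h₁.2, h₂.2]⟩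

theorem perm (h : IsCountingList l₁) (hp : l₁.Perm l₂) : IsCountingList l₂ :=
  ⟨fun x hx => h.1 x (hp.mem_iff.2 hx), by rw [← hp.sum_eq, ← hp.length_eq, h.2]⟩

theorem merge {a b : ℝ} (h : IsCountingList (a :: b :: l)) :
    IsCountingList ((a + b) :: 0 :: l) := by
  obtain ⟨hnonneg, hsum⟩ := h
  simp only [List.mem_cons, forall_eq_or_imp] at hnonneg
  refine ⟨?_, by simpa [add_assoc] using hsum⟩
  simpa [add_nonneg hnonneg.1 hnonneg.2.1] using hnonneg.2.2

end IsCountingList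

noncomputable def filler (n : ℕ) (r : ℝ) : List ℝ := List.ofFn fun _ : Fin n => r / n

theorem isCountingList_append_filler {l : List ℝ} (hl : ∀ x ∈ l, 0 ≤ x) {n : ℕ} (hn : n ≠ 0)
    {r : ℝ} (hr : 0 ≤ r) (hsum : l.sum + r = l.length + n) :
    IsCountingList (l ++ filler n r) := by
  refine ⟨fun x hx => ?_, ?_⟩
  · rcases List.mem_append.1 hx with hx | hx
    · exact hl x hx
    · obtain ⟨_, rfl⟩ := List.mem_ofFn.1 hx
      positivity
  · simp [filler, mul_div_cancel₀ r (Nat.cast_ne_zero.2 hn), hsum]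

theorem exists_isCountingList_append {l : List ℝ} (hl : ∀ x ∈ l, 0 ≤ x) :
    ∃ l', IsCountingList (l ++ l') := by
  have hceil := Nat.le_ceil l.sum
  exact ⟨_, isCountingList_append_filler hl (n := ⌈l.sum⌉₊ + 1) (Nat.succ_ne_zero _)
    (r := l.length + (⌈l.sum⌉₊ + 1) - l.sum) (by linarith) (by push_cast; ring)⟩

def IsConcatAdditive (M : ∀ N : ℕ, (Fin N → ℝ) → ℝ) : Prop :=
  ∀ (N K : ℕ) (P : Fin N → ℝ) (Q : Fin K → ℝ), IsCountingVector P → IsCountingVector Q →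
    M (N + K) (Fin.append P Q) = M N P + M K Q

def IsSymmetric (M : ∀ N : ℕ, (Fin N → ℝ) → ℝ) : Prop :=
  ∀ (N : ℕ) (P : Fin N → ℝ), IsCountingVector P → ∀ σ : Equiv.Perm (Fin N), M N (P ∘ σ) = M N P

def evalList (M : ∀ N : ℕ, (Fin N → ℝ) → ℝ) (l : List ℝ) : ℝ := M l.length l.get

section EvalList

variable {M : ∀ N : ℕ, (Fin N → ℝ) → ℝ} {l l₁ l₂ : List ℝ}

theorem evalList_ofFn {n : ℕ} (P : Fin n → ℝ) : evalList M (List.ofFn P) = M n P := by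
  unfold evalList
  congr 1 <;> simp [Fin.heq_fun_iff]

theorem evalList_append (hA : IsConcatAdditive M) (h₁ : IsCountingList l₁)
    (h₂ : IsCountingList l₂) : evalList M (l₁ ++ l₂) = evalList M l₁ + evalList M l₂ := by
  obtain ⟨n, P, rfl⟩ : ∃ n, ∃ P : Fin n → ℝ, l₁ = List.ofFn P := ⟨_, _, (List.ofFn_get l₁).symm⟩
  obtain ⟨k, Q, rfl⟩ : ∃ k, ∃ Q : Fin k → ℝ, l₂ = List.ofFn Q := ⟨_, _, (List.ofFn_get l₂).symm⟩
  rw [← List.ofFn_fin_append, evalList_ofFn, evalList_ofFn, evalList_ofFn]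
  exact hA n k P Q (isCountingList_ofFn.1 h₁) (isCountingList_ofFn.1 h₂)

theorem evalList_nil (hA : IsConcatAdditive M) : evalList M [] = 0 := by
  simpa using evalList_append hA isCountingList_nil isCountingList_nil

theorem evalList_perm (hS : IsSymmetric M) (h : IsCountingList l₁) (hp : l₁.Perm l₂) :
    evalList M l₁ = evalList M l₂ := by
  obtain ⟨n, f, rfl⟩ : ∃ n, ∃ f : Fin n → ℝ, l₁ = List.ofFn f := ⟨_, _, (List.ofFn_get l₁).symm⟩
  obtain ⟨g, rfl⟩ : ∃ g : Fin n → ℝ, l₂ = List.ofFn g :=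
    ⟨_, (List.ofFn_get l₂).symm.trans (List.ofFn_congr (by simp [← hp.length_eq]) _)⟩
  obtain ⟨σ, rfl⟩ := exists_comp_perm_eq_of_perm_ofFn hp
  rw [evalList_ofFn, evalList_ofFn, hS n f (isCountingList_ofFn.1 h) σ]

theorem evalList_replicate_one (hA : IsConcatAdditive M) (h1 : M 1 (fun _ => 1) = 0) (n : ℕ) :
    evalList M (List.replicate n 1) = 0 := by
  induction n with
  | zero => exact evalList_nil hA
  | succ n ih =>
    have hone : IsCountingList [1] := by simp [IsCountingList]
    have hrep : IsCountingList (List.replicate n 1) := by simp [IsCountingList]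
    have heval : evalList M [1] = 0 := (evalList_ofFn fun _ : Fin 1 => (1 : ℝ)).trans h1
    rw [List.replicate_succ, ← List.singleton_append, evalList_append hA hone hrep, ih, heval,
      add_zero]

theorem continuousOn_evalList_ofFn
    (hC : ∀ N : ℕ, ContinuousOn (M N) {P : Fin N → ℝ | IsCountingVector P})
    {X : Type*} [TopologicalSpace X] {n : ℕ} {F : X → Fin n → ℝ} {S : Set X} (hF : Continuous F)
    (hFS : ∀ x ∈ S, IsCountingVector (F x)) :
    ContinuousOn (fun x => evalList M (List.ofFn (F x))) S := by
  simp only [evalList_ofFn]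
  exact (hC n).comp hF.continuousOn hFS

end EvalList

def defectAlong (M : ∀ N : ℕ, (Fin N → ℝ) → ℝ) (l : List ℝ) (a b : ℝ) : ℝ :=
  evalList M (a :: b :: l) - evalList M ((a + b) :: 0 :: l)

/-- For `M = ∑ m` this is `m a + m b - m (a + b) - m 0`; by `defectAlong_eq_defectAlong` the
padding may be any completion of `a, b` to a counting list. -/
noncomputable def defect (M : ∀ N : ℕ, (Fin N → ℝ) → ℝ) (a b : ℝ) : ℝ :=
  let n := ⌈a + b⌉₊ + 1
  defectAlong M (filler n (n + 2 - (a + b))) a b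

theorem isCountingList_cons_cons_filler {a b : ℝ} (ha : 0 ≤ a) (hb : 0 ≤ b) {n : ℕ}
    (hn : n ≠ 0) (hab : a + b ≤ n + 2) : IsCountingList (a :: b :: filler n (n + 2 - (a + b))) :=
  isCountingList_append_filler (l := [a, b]) (by simp [ha, hb]) hn (by linarith)
    (by simp only [List.sum_cons, List.sum_nil, List.length_cons, List.length_nil]; push_cast; ring)

section Defect

variable {M : ∀ N : ℕ, (Fin N → ℝ) → ℝ} (hA : IsConcatAdditive M) (hS : IsSymmetric M)
  {a b c : ℝ} {l₁ l₂ : List ℝ}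

include hA hS

theorem defectAlong_eq_defectAlong (h₁ : IsCountingList (a :: b :: l₁))
    (h₂ : IsCountingList (a :: b :: l₂)) : defectAlong M l₁ a b = defectAlong M l₂ a b := by
  have hp : ((a :: b :: l₁) ++ ((a + b) :: 0 :: l₂)).Perm
      (((a + b) :: 0 :: l₁) ++ (a :: b :: l₂)) :=
    List.perm_iff_count.2 fun x => by simp only [List.count_append, List.count_cons]; omega
  have := evalList_perm hS (h₁.append h₂.merge) hp
  rw [evalList_append hA h₁ h₂.merge, evalList_append hA h₁.merge h₂] at this
  unfold defectAlong
  linarith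

theorem defect_eq_defectAlong (h : IsCountingList (a :: b :: l₁)) :
    defect M a b = defectAlong M l₁ a b := by
  have ha : 0 ≤ a := h.1 a (by simp)
  have hb : 0 ≤ b := h.1 b (by simp)
  exact defectAlong_eq_defectAlong hA hS (isCountingList_cons_cons_filler ha hb
    (Nat.succ_ne_zero _) (by push_cast; linarith [Nat.le_ceil (a + b)])) h

theorem defect_zero_left (hb : 0 ≤ b) : defect M 0 b = 0 := by
  obtain ⟨l, hl⟩ := exists_isCountingList_append (l := [0, b]) (by simp [hb])
  simp only [List.cons_append, List.nil_append] at hl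
  rw [defect_eq_defectAlong hA hS hl, defectAlong, zero_add,
    evalList_perm hS hl (List.Perm.swap b 0 l), sub_self]

theorem defect_cocycle (ha : 0 ≤ a) (hb : 0 ≤ b) (hc : 0 ≤ c) :
    defect M a b + defect M (a + b) c = defect M a (b + c) + defect M b c := by
  obtain ⟨l, hl⟩ := exists_isCountingList_append (l := [a, b, c]) (by simp [ha, hb, hc])
  simp only [List.cons_append, List.nil_append] at hl
  -- all four defects are read off the common padding `l`
  have hmid : ((b + c) :: 0 :: a :: l).Perm (a :: (b + c) :: 0 :: l) :=
    List.perm_middle (l₁ := [b + c, 0])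
  have hcycle : (a :: b :: c :: l).Perm (b :: c :: a :: l) :=
    (List.perm_middle (l₁ := [b, c])).symm
  have hbca : IsCountingList (b :: c :: a :: l) := hl.perm hcycle
  have hswap : ((a + b) :: 0 :: c :: l).Perm ((a + b) :: c :: 0 :: l) :=
    (List.Perm.swap c 0 l).cons _
  rw [defect_eq_defectAlong hA hS hl, defect_eq_defectAlong hA hS (hl.merge.perm hswap),
    defect_eq_defectAlong hA hS hbca,
    defect_eq_defectAlong hA hS (hbca.merge.perm hmid)]
  unfold defectAlong
  rw [evalList_perm hS hl.merge hswap, evalList_perm hS hl hcycle,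
    evalList_perm hS hbca.merge hmid, add_assoc a b c]
  ring

theorem continuous_defect_max
    (hC : ∀ N : ℕ, ContinuousOn (M N) {P : Fin N → ℝ | IsCountingVector P}) :
    Continuous fun q : ℝ × ℝ => defect M (max q.1 0) (max q.2 0) := by
  rw [continuous_iff_continuousAt]
  intro q
  -- near `q` the filler length `n` can be frozen
  set n := ⌈max q.1 0 + max q.2 0⌉₊ + 1
  set U := {p : ℝ × ℝ | max p.1 0 + max p.2 0 < n + 2}
  have hq : q ∈ U := by
    show max q.1 0 + max q.2 0 < (n : ℝ) + 2
    simp only [n, Nat.cast_add, Nat.cast_one]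
    linarith [Nat.le_ceil (max q.1 0 + max q.2 0)]
  have hcount : ∀ p ∈ U, IsCountingList (max p.1 0 :: max p.2 0 ::
      filler n (n + 2 - (max p.1 0 + max p.2 0))) := fun p hp =>
    isCountingList_cons_cons_filler (le_max_right _ _) (le_max_right _ _) (Nat.succ_ne_zero _) hp.le
  have hofFn : ∀ x y r : ℝ,
      x :: y :: filler n r = List.ofFn (Fin.cons x (Fin.cons y fun _ : Fin n => r / n)) := by
    simp [filler, List.ofFn_succ]
  refine ContinuousOn.continuousAt ?_ ((isOpen_lt (by fun_prop) continuous_const).mem_nhds hq)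
  refine ContinuousOn.congr ?_ fun p hp => defect_eq_defectAlong hA hS (hcount p hp)
  simp only [defectAlong, hofFn]
  refine (continuousOn_evalList_ofFn hC (by fun_prop) fun p hp => ?_).sub
    (continuousOn_evalList_ofFn hC (by fun_prop) fun p hp => ?_)
  · rw [← isCountingList_ofFn, ← hofFn]
    exact hcount p hp
  · rw [← isCountingList_ofFn, ← hofFn]
    exact (hcount p hp).merge

end Defect

theorem exists_defect_eq_add_sub {M : ∀ N : ℕ, (Fin N → ℝ) → ℝ} (hA : IsConcatAdditive M)
    (hS : IsSymmetric M)
    (hC : ∀ N : ℕ, ContinuousOn (M N) {P : Fin N → ℝ | IsCountingVector P}) :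
    ∃ φ : ℝ → ℝ, Continuous φ ∧ φ 0 = 0 ∧
      ∀ a b, 0 ≤ a → 0 ≤ b → defect M a b = φ a + φ b - φ (a + b) := by
  set c : ℝ → ℝ → ℝ := fun x y => defect M (max x 0) (max y 0)
  have hc : Continuous (uncurry c) := continuous_defect_max hA hS hC
  have hcoc : ∀ a b d, 0 ≤ a → 0 ≤ b → 0 ≤ d → c a b + c (a + b) d = c a (b + d) + c b d := by
    intro a b d ha hb hd
    simp only [c, max_eq_left, ha, hb, hd, add_nonneg]
    exact defect_cocycle hA hS ha hb hd
  have hpot := @eq_cocyclePotential_add_sub c hc hcoc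
  refine ⟨cocyclePotential c, continuous_cocyclePotential hc, ?_, fun a b ha hb => ?_⟩
  · have := hpot le_rfl le_rfl
    simp only [c, max_self, defect_zero_left hA hS le_rfl, add_zero] at this
    linarith
  · simpa [c, ha, hb, add_nonneg] using hpot ha hb

def residual (M : ∀ N : ℕ, (Fin N → ℝ) → ℝ) (φ : ℝ → ℝ) (l : List ℝ) : ℝ :=
  evalList M l - (l.map φ).sum

section Residual

variable {M : ∀ N : ℕ, (Fin N → ℝ) → ℝ} (hA : IsConcatAdditive M) (hS : IsSymmetric M)
  {φ : ℝ → ℝ} (hφ0 : φ 0 = 0)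
  (hφ : ∀ a b, 0 ≤ a → 0 ≤ b → defect M a b = φ a + φ b - φ (a + b))

include hS in
theorem residual_perm {l₁ l₂ : List ℝ} (h : IsCountingList l₁) (hp : l₁.Perm l₂) :
    residual M φ l₁ = residual M φ l₂ := by
  rw [residual, residual, evalList_perm hS h hp, (hp.map φ).sum_eq]

include hA hS hφ0 hφ

theorem residual_merge {a b : ℝ} {l : List ℝ} (h : IsCountingList (a :: b :: l)) :
    residual M φ (a :: b :: l) = residual M φ ((a + b) :: 0 :: l) := by
  have hdefect := (defect_eq_defectAlong hA hS h).symm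
  rw [defectAlong, hφ a b (h.1 a (by simp)) (h.1 b (by simp))] at hdefect
  simp only [residual, List.map_cons, List.sum_cons, hφ0]
  linarith

theorem residual_collapse : ∀ (l : List ℝ) (x : ℝ) (k : ℕ),
    IsCountingList (x :: (l ++ List.replicate k 0)) →
      residual M φ (x :: (l ++ List.replicate k 0)) =
        residual M φ ((x + l.sum) :: List.replicate (l.length + k) 0)
  | [], x, k, _ => by simp
  | y :: l, x, k, h => by
    rw [List.cons_append] at h ⊢
    have hperm : ((x + y) :: 0 :: (l ++ List.replicate k 0)).Perm
        ((x + y) :: (l ++ List.replicate (k + 1) 0)) :=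
      .cons _ (by rw [List.replicate_succ]; exact List.perm_middle.symm)
    rw [residual_merge hA hS hφ0 hφ h, residual_perm hS h.merge hperm,
      residual_collapse l (x + y) (k + 1) (h.merge.perm hperm)]
    simp only [List.sum_cons, List.length_cons, add_assoc, Nat.add_comm 1 k]

theorem residual_eq_collapsed {x : ℝ} {l : List ℝ} (h : IsCountingList (x :: l)) :
    residual M φ (x :: l) = residual M φ ((l.length + 1 : ℝ) :: List.replicate l.length 0) := by
  have hsum : x + l.sum = l.length + 1 := by simpa using h.2
  simpa [hsum] using residual_collapse hA hS hφ0 hφ l x 0 (by simpa using h)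

theorem residual_eq_neg_length_mul (h1 : M 1 (fun _ => 1) = 0) {l : List ℝ}
    (h : IsCountingList l) : residual M φ l = -(l.length * φ 1) := by
  cases l with
  | nil => simp [residual, evalList_nil hA]
  | cons x l =>
    have hones := residual_eq_collapsed hA hS hφ0 hφ (x := 1) (l := List.replicate l.length 1)
      (by simp [IsCountingList, add_comm])
    rw [List.length_replicate, ← List.replicate_succ] at hones
    rw [residual_eq_collapsed hA hS hφ0 hφ h, ← hones, residual,
      evalList_replicate_one hA h1]
    simp

end Residual

def IsGenerating (M : ∀ N : ℕ, (Fin N → ℝ) → ℝ) (m : ℝ → ℝ) : Prop :=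
  ∀ (N : ℕ) (P : Fin N → ℝ), IsCountingVector P → M N P = ∑ i, m (P i)

section Generating

variable {M : ∀ N : ℕ, (Fin N → ℝ) → ℝ} {m m' : ℝ → ℝ}

theorem isGenerating_iff_list :
    IsGenerating M m ↔ ∀ l, IsCountingList l → evalList M l = (l.map m).sum := by
  refine ⟨fun h l hl => ?_, fun h N P hP => ?_⟩
  · obtain ⟨n, P, rfl⟩ : ∃ n, ∃ P : Fin n → ℝ, l = List.ofFn P := ⟨_, _, (List.ofFn_get l).symm⟩
    rw [evalList_ofFn, h n P (isCountingList_ofFn.1 hl), List.map_ofFn, List.sum_ofFn]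
    rfl
  · rw [← evalList_ofFn (M := M) P, h _ (isCountingList_ofFn.2 hP), List.map_ofFn,
      List.sum_ofFn]
    rfl

theorem exists_continuous_isGenerating (hA : IsConcatAdditive M) (hS : IsSymmetric M)
    (hC : ∀ N : ℕ, ContinuousOn (M N) {P : Fin N → ℝ | IsCountingVector P})
    (h1 : M 1 (fun _ => 1) = 0) : ∃ m : ℝ → ℝ, Continuous m ∧ IsGenerating M m := by
  obtain ⟨φ, hφc, hφ0, hφ⟩ := exists_defect_eq_add_sub hA hS hC
  refine ⟨fun x => φ x - φ 1, hφc.sub continuous_const, isGenerating_iff_list.2 fun l hl => ?_⟩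
  have := residual_eq_neg_length_mul hA hS hφ0 hφ h1 hl
  rw [residual] at this
  simp only [sub_eq_add_neg, List.sum_map_add, List.map_const', List.sum_replicate,
    nsmul_eq_mul]
  linarith

theorem IsGenerating.add_mul_one_sub (h : IsGenerating M m) (K : ℝ) :
    IsGenerating M fun p => m p + K * (1 - p) := by
  intro N P hP
  rw [h N P hP, Finset.sum_add_distrib, ← Finset.mul_sum, Finset.sum_sub_distrib, hP.2]
  simp

theorem IsGenerating.eqOn (hm : IsGenerating M m) (hm' : IsGenerating M m')
    (hc : ContinuousOn m (Ici 0)) (hc' : ContinuousOn m' (Ici 0)) (h0 : m 0 = m' 0) :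
    EqOn m m' (Ici 0) := by
  have hsum : ∀ l, IsCountingList l → (l.map m).sum = (l.map m').sum := fun l hl =>
    (isGenerating_iff_list.1 hm l hl).symm.trans (isGenerating_iff_list.1 hm' l hl)
  -- `m - m'` is additive: compare the counting lists `x :: y :: l` and `(x + y) :: 0 :: l`
  have hadd : ∀ x y, 0 ≤ x → 0 ≤ y →
      m (x + y) - m' (x + y) = (m x - m' x) + (m y - m' y) := by
    intro x y hx hy
    obtain ⟨l, hl⟩ := exists_isCountingList_append (l := [x, y]) (by simp [hx, hy])
    simp only [List.cons_append, List.nil_append] at hl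
    have h₁ := hsum _ hl
    have h₂ := hsum _ hl.merge
    simp only [List.map_cons, List.sum_cons] at h₁ h₂
    linarith
  have h1 : m 1 = m' 1 := by simpa using hsum [1] (by simp [IsCountingList])
  intro p hp
  have := eq_mul_of_map_add_of_continuousOn (hc.sub hc') hadd hp
  rw [Pi.sub_apply, Pi.sub_apply, h1, sub_self, mul_zero] at this
  linarith

end Generating

end CoENF

theorem IsCoENF.apply_one_eq_zero {M : ∀ N : ℕ, (Fin N → ℝ) → ℝ} (hM : IsCoENF M) :
    M 1 (fun _ => 1) = 0 := by
  simpa [Subsingleton.elim _ (0 : Fin 1)] using hM.2.2.2.2 0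

theorem coENF_unique_continuous_generating (M : ∀ N : ℕ, (Fin N → ℝ) → ℝ)
    (hM : IsCoENF M) (t : ℝ) :
    ∃ m : ℝ → ℝ,
      (ContinuousOn m (Set.Ici 0) ∧ m 0 = t ∧
        ∀ (N : ℕ) (P : Fin N → ℝ), IsCountingVector P → M N P = ∑ i, m (P i)) ∧
      ∀ m' : ℝ → ℝ,
        (ContinuousOn m' (Set.Ici 0) ∧ m' 0 = t ∧
          ∀ (N : ℕ) (P : Fin N → ℝ), IsCountingVector P → M N P = ∑ i, m' (P i)) →
        ∀ p : ℝ, 0 ≤ p → m' p = m p := by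
  obtain ⟨m, hmc, hm⟩ :=
    CoENF.exists_continuous_isGenerating hM.1 hM.2.1 hM.2.2.1 hM.apply_one_eq_zero
  have hgen : CoENF.IsGenerating M fun p => m p + (t - m 0) * (1 - p) := hm.add_mul_one_sub _
  have hcont : ContinuousOn (fun p => m p + (t - m 0) * (1 - p)) (Ici 0) := by fun_prop
  refine ⟨_, ⟨hcont, by simp, hgen⟩, fun m' ⟨hc', h0', hm'⟩ p hp => ?_⟩
  exact CoENF.IsGenerating.eqOn hm' hgen hc' hcont (by simp [h0']) hp
end

section
/- For a fixed counting vector P ∈ W_N, write β₀ = #{i : pᵢ = 0} and β₁ = Σᵢ max(1−pᵢ, 0). Then: (i) the set of values {M[P] : M a co-ENF} is contained in [β₀, β₁]; (ii) β₀ = β₁ if and only if no entry of P lies in the open interval (0,1); (iii) if β₀ < β₁, then {M[P] : M a co-ENF} = [β₀, β₁], with all intermediate values attained by the family M_α[P] = Σ_{pᵢ=0} 1 + Σ_{pᵢ∈(0,1)} (1 − pᵢ^α), α ∈ (0,1], together with the endpoint α → 0. -/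
/-!
A co-ENF is Schur-convex on each `W_n`: by symmetry and (M⁺), the Hardy–Littlewood–Pólya transfer
argument makes `M` monotone along majorization, and between counting vectors of equal length
majorization amounts to `∑ (x i - c)⁺ ≤ ∑ (y i - c)⁺` for all `c ≥ 0`, which can be checked
without sorting. Additivity and (co-B2) evaluate `M` on concatenations of ones and spikes
`(k + 1, 0, …, 0)`: it counts their zeros.

Padding `P` by ones and one spike gives a vector that majorizes copies of `(2, 0)`, whence
`β₀ ≤ M[P]`. Dually, `L` copies of `P`, padded by ones, are majorized by `⌈L β₁ / N⌉` spikes of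
height `N + 1`, whence `L M[P] ≤ L β₁ + N` for every `L`, i.e. `M[P] ≤ β₁`. Finally every value in
`[β₀, β₁]` is `∑ m (P i)` for a convex combination `m` of the hinges `(1 - x / δ)⁺` and
`(1 - x)⁺`, with `δ` below every positive entry of `P`.
-/

open Finset Function

section CountingVectors

lemma IsCountingVector.apply_le {n : ℕ} {v : Fin n → ℝ} (hv : IsCountingVector v) (i : Fin n) :
    v i ≤ n :=
  hv.2 ▸ single_le_sum (fun j _ => hv.1 j) (mem_univ i)

lemma IsCountingVector.comp_perm {n : ℕ} {v : Fin n → ℝ} (hv : IsCountingVector v)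
    (σ : Equiv.Perm (Fin n)) : IsCountingVector (v ∘ σ) :=
  ⟨fun i => hv.1 (σ i), (Equiv.sum_comp σ v).trans hv.2⟩

lemma sum_comp_append {m n : ℕ} (f : ℝ → ℝ) (u : Fin m → ℝ) (v : Fin n → ℝ) :
    ∑ i, f (Fin.append u v i) = ∑ i, f (u i) + ∑ i, f (v i) := by
  simp [Fin.sum_univ_add]

lemma sum_comp_repeat {n : ℕ} (f : ℝ → ℝ) (L : ℕ) (v : Fin n → ℝ) :
    ∑ i, f (Fin.repeat L v i) = L * ∑ i, f (v i) := by
  induction L with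
  | zero =>
    have : IsEmpty (Fin (0 * n)) := ⟨fun i => by simpa using i.2⟩
    simp
  | succ L ih =>
    rw [Fin.repeat_succ]
    simp only [Function.comp_apply]
    rw [Fin.sum_congr' (fun i => f (Fin.append v (Fin.repeat L v) i)), sum_comp_append, ih]
    push_cast
    ring

def spike (n : ℕ) : Fin (n + 1) → ℝ := fun k => if k = 0 then ((n + 1 : ℕ) : ℝ) else 0

lemma sum_comp_spike (f : ℝ → ℝ) (n : ℕ) : ∑ i, f (spike n i) = f (n + 1) + n * f 0 := by
  simp [spike, Fin.sum_univ_succ, Fin.succ_ne_zero]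

lemma IsCountingVector.append {m n : ℕ} {u : Fin m → ℝ} {v : Fin n → ℝ}
    (hu : IsCountingVector u) (hv : IsCountingVector v) : IsCountingVector (Fin.append u v) := by
  refine ⟨fun i => ?_, ?_⟩
  · induction i using Fin.addCases <;> simp [hu.1, hv.1]
  · simpa [hu.2, hv.2] using sum_comp_append id u v

lemma IsCountingVector.repeat {n : ℕ} {v : Fin n → ℝ} (hv : IsCountingVector v) (L : ℕ) :
    IsCountingVector (Fin.repeat L v) :=
  ⟨fun i => hv.1 _, by simpa [hv.2] using sum_comp_repeat id L v⟩

lemma isCountingVector_one (m : ℕ) : IsCountingVector (1 : Fin m → ℝ) :=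
  ⟨fun _ => zero_le_one, by simp⟩

lemma isCountingVector_spike (n : ℕ) : IsCountingVector (spike n) := by
  refine ⟨fun i => ?_, by simpa using sum_comp_spike id n⟩
  unfold spike
  split_ifs <;> positivity

end CountingVectors

section Majorization

variable {n : ℕ}

def prefixSum (v : Fin n → ℝ) (k : ℕ) : ℝ := ∑ i : Fin n with i.val < k, v i

lemma prefixSum_add (u v : Fin n → ℝ) (k : ℕ) :
    prefixSum (u + v) k = prefixSum u k + prefixSum v k :=
  sum_add_distrib

lemma prefixSum_sub (u v : Fin n → ℝ) (k : ℕ) :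
    prefixSum (u - v) k = prefixSum u k - prefixSum v k :=
  sum_sub_distrib _ _

lemma prefixSum_single (a : Fin n) (δ : ℝ) (k : ℕ) :
    prefixSum (Pi.single a δ) k = if (a : ℕ) < k then δ else 0 := by
  simp [prefixSum, sum_pi_single']

lemma prefixSum_succ (v : Fin n → ℝ) (a : Fin n) :
    prefixSum v (a + 1) = prefixSum v a + v a := by
  have : univ.filter (fun i : Fin n => i.val < a + 1) =
      insert a (univ.filter fun i : Fin n => i.val < a) := by
    ext i
    simp only [mem_filter, mem_univ, true_and, mem_insert, Fin.ext_iff]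
    omega
  rw [prefixSum, this, sum_insert (by simp), add_comm]
  rfl

lemma prefixSum_of_le (v : Fin n → ℝ) {k : ℕ} (hk : n ≤ k) : prefixSum v k = ∑ i, v i := by
  rw [prefixSum, filter_true_of_mem fun i _ => i.2.trans_le hk]

lemma prefixSum_eq_of_eq_zero {v : Fin n → ℝ} {j k : ℕ} (hjk : j ≤ k)
    (hv : ∀ i : Fin n, j ≤ i → (i : ℕ) < k → v i = 0) : prefixSum v k = prefixSum v j := by
  refine (sum_subset (fun i => by simp only [mem_filter, mem_univ, true_and]; omega)
    fun i hik hij => ?_).symm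
  simp only [mem_filter, mem_univ, true_and, not_lt] at hik hij
  exact hv i hij hik

def transfer (y : Fin n → ℝ) (a b : Fin n) (δ : ℝ) : Fin n → ℝ := y - Pi.single a δ + Pi.single b δ

lemma update_update_eq_transfer (P : Fin n → ℝ) {i j : Fin n} (hij : i ≠ j) (ε : ℝ) :
    update (update P i (P i - ε)) j (P j + ε) = transfer P i j ε := by
  ext k
  rcases eq_or_ne k j with rfl | hkj
  · simp [transfer, hij.symm]
  rcases eq_or_ne k i with rfl | hki
  · simp [transfer, hkj]
  · simp [transfer, hki, hkj]

lemma exists_transfer_indices {x y : Fin n → ℝ} (hsum : ∑ i, x i = ∑ i, y i)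
    (h : ∀ k, prefixSum x k ≤ prefixSum y k) (hne : x ≠ y) :
    ∃ a b : Fin n, a < b ∧ x a < y a ∧ y b < x b ∧ ∀ i, a < i → i < b → x i = y i := by
  have hB : ({i : Fin n | y i < x i} : Finset (Fin n)).Nonempty := by
    by_contra! hB
    refine hne (funext fun i => ?_)
    have hle : ∀ i ∈ univ, x i ≤ y i := fun i _ => by
      simpa using (filter_eq_empty_iff.1 hB) (mem_univ i)
    exact (sum_eq_sum_iff_of_le hle).1 hsum i (mem_univ i)
  obtain ⟨b, hb, hbmin⟩ := exists_min_image _ id hB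
  simp only [mem_filter, mem_univ, true_and, id] at hb hbmin
  have hA : ({i : Fin n | i < b ∧ x i < y i} : Finset (Fin n)).Nonempty := by
    by_contra! hA
    have hxy : prefixSum x b = prefixSum y b := sum_congr rfl fun i hi => by
      have hib : i < b := by simpa using hi
      have := (filter_eq_empty_iff.1 hA) (mem_univ i)
      exact le_antisymm (not_lt.1 fun h => (hbmin i h).not_gt hib) (by simpa [hib] using this)
    have := h (b + 1)
    rw [prefixSum_succ, prefixSum_succ, hxy] at this
    linarith
  obtain ⟨a, ha, hamax⟩ := exists_max_image _ id hA
  simp only [mem_filter, mem_univ, true_and, id] at ha hamax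
  refine ⟨a, b, ha.1, ha.2, hb, fun i hai hib => le_antisymm ?_ ?_⟩
  · exact not_lt.1 fun h => (hbmin i h).not_gt hib
  · exact not_lt.1 fun h => (hamax i ⟨hib, h⟩).not_gt hai

section Transfer

variable {x y : Fin n → ℝ} {a b : Fin n} {δ : ℝ}

lemma transfer_apply_left (hab : a ≠ b) : transfer y a b δ a = y a - δ := by
  simp [transfer, hab]

lemma transfer_apply_right (hab : a ≠ b) : transfer y a b δ b = y b + δ := by
  simp [transfer, hab.symm]

lemma transfer_apply_of_ne {i : Fin n} (hia : i ≠ a) (hib : i ≠ b) : transfer y a b δ i = y i := by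
  simp [transfer, hia, hib]

lemma transfer_transfer : transfer (transfer y a b δ) b a δ = y := by
  simp only [transfer]
  abel

lemma isCountingVector_transfer (hx : IsCountingVector x) (hy : IsCountingVector y) (hab : a ≠ b)
    (hδ : 0 ≤ δ) (hδa : δ ≤ y a - x a) : IsCountingVector (transfer y a b δ) := by
  refine ⟨fun i => ?_, by simp [transfer, sum_add_distrib, sum_sub_distrib, hy.2]⟩
  rcases eq_or_ne i a with rfl | hia
  · rw [transfer_apply_left hab]
    linarith [hx.1 i]
  rcases eq_or_ne i b with rfl | hib
  · rw [transfer_apply_right hab]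
    linarith [hy.1 i]
  · rw [transfer_apply_of_ne hia hib]
    exact hy.1 i

lemma prefixSum_le_transfer (h : ∀ k, prefixSum x k ≤ prefixSum y k) (hab : a < b)
    (hδa : δ ≤ y a - x a) (hmid : ∀ i, a < i → i < b → x i = y i) (k : ℕ) :
    prefixSum x k ≤ prefixSum (transfer y a b δ) k := by
  rw [transfer, prefixSum_add, prefixSum_sub, prefixSum_single, prefixSum_single]
  have hab' : (a : ℕ) < b := hab
  by_cases hak : (a : ℕ) < k
  · by_cases hbk : (b : ℕ) < k
    · simp only [hak, hbk, if_true]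
      linarith [h k]
    have hconst : prefixSum (y - x) k = prefixSum (y - x) (a + 1) :=
      prefixSum_eq_of_eq_zero hak fun i hai hik => by
        simp [hmid i (Fin.lt_def.2 (by omega)) (Fin.lt_def.2 (by omega))]
    rw [prefixSum_succ, prefixSum_sub, prefixSum_sub] at hconst
    simp only [hak, hbk, if_true, if_false, Pi.sub_apply] at hconst ⊢
    linarith [h a]
  · simp only [hak, show ¬ (b : ℕ) < k by omega, if_false]
    linarith [h k]

lemma antitone_transfer (hxa : Antitone x) (hya : Antitone y) (hab : a < b) (hδ : 0 ≤ δ)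
    (hδa : δ ≤ y a - x a) (hδb : δ ≤ x b - y b) (hmid : ∀ i, a < i → i < b → x i = y i) :
    Antitone (transfer y a b δ) := by
  set y' := transfer y a b δ
  have hle : ∀ i, i ≠ b → y' i ≤ y i := fun i hib => by
    rcases eq_or_ne i a with rfl | hia
    · linarith [transfer_apply_left (y := y) hab.ne (δ := δ)]
    · exact (transfer_apply_of_ne hia hib).le
  have hge : ∀ i, i ≠ a → y i ≤ y' i := fun i hia => by
    rcases eq_or_ne i b with rfl | hib
    · linarith [transfer_apply_right (y := y) hab.ne (δ := δ)]
    · exact (transfer_apply_of_ne hia hib).ge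
  -- between `a` and `b` the entries of `y'` are squeezed by those of `x`
  have hlo : ∀ i, i < b → x (max i a) ≤ y' i := fun i hib => by
    rcases le_or_gt i a with hia | hai
    · rw [max_eq_right hia]
      rcases hia.eq_or_lt with rfl | hia
      · linarith [transfer_apply_left (y := y) hab.ne (δ := δ)]
      · linarith [hya hia.le, hge i hia.ne]
    · rw [max_eq_left hai.le, hmid i hai hib]
      exact hge i hai.ne'
  have hhi : ∀ j, a < j → y' j ≤ x (min j b) := fun j haj => by
    rcases le_or_gt b j with hbj | hjb
    · rw [min_eq_right hbj]
      rcases hbj.eq_or_lt with rfl | hbj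
      · linarith [transfer_apply_right (y := y) hab.ne (δ := δ)]
      · linarith [hya hbj.le, hle j hbj.ne']
    · rw [min_eq_left hjb.le, hmid j haj hjb]
      exact hle j hjb.ne
  intro i j hij
  rcases eq_or_lt_of_le hij with rfl | hij
  · rfl
  by_cases hA : i < b ∧ a < j
  · exact (hhi j hA.2).trans ((hxa (le_min (max_le hij.le hA.2.le) (max_le hA.1.le hab.le))).trans
      (hlo i hA.1))
  · have hjb : j ≠ b := fun h => hA ⟨h ▸ hij, h ▸ hab⟩
    have hia : i ≠ a := fun h => hA ⟨h ▸ hab, h ▸ hij⟩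
    exact (hle j hjb).trans ((hya hij.le).trans (hge i hia))

lemma card_ne_transfer_lt (hab : a ≠ b) (ha : x a < y a) (hb : y b < x b) :
    #{i | x i ≠ transfer y a b (min (y a - x a) (x b - y b)) i} < #{i | x i ≠ y i} := by
  refine card_lt_card ((ssubset_iff_of_subset fun i => ?_).2 ?_)
  · simp only [mem_filter, mem_univ, true_and]
    rcases eq_or_ne i a with rfl | hia
    · exact fun _ => ha.ne
    rcases eq_or_ne i b with rfl | hib
    · exact fun _ => hb.ne'
    rw [transfer_apply_of_ne hia hib]
    exact id
  · rcases min_choice (y a - x a) (x b - y b) with hδ | hδ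
    · exact ⟨a, by simp [ha.ne], by simp [transfer_apply_left hab, hδ]⟩
    · exact ⟨b, by simp [hb.ne'], by simp [transfer_apply_right hab, hδ]⟩

end Transfer

variable (F : (Fin n → ℝ) → ℝ)

def PermInvariant : Prop :=
  ∀ P : Fin n → ℝ, IsCountingVector P → ∀ σ : Equiv.Perm (Fin n), F (P ∘ σ) = F P

def CumulationMonotone : Prop :=
  ∀ P : Fin n → ℝ, IsCountingVector P → ∀ i j : Fin n, i ≠ j → P i ≤ P j →
    ∀ ε : ℝ, 0 < ε → ε ≤ P i → ε ≤ n - P j →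
      F P ≤ F (update (update P i (P i - ε)) j (P j + ε))

variable {F}

/-- The Hardy–Littlewood–Pólya argument: each step moves `min (y a - x a) (x b - y b)` from `y a`
down to `y b`, which lowers `F` by (M⁺), keeps `y` antitone and majorizing `x`, and makes one more
entry agree with `x`. -/
theorem CumulationMonotone.le_of_prefixSum_le (hF : CumulationMonotone F) {x : Fin n → ℝ}
    (hx : IsCountingVector x) (hxa : Antitone x) {y : Fin n → ℝ} (hy : IsCountingVector y)
    (hya : Antitone y) (h : ∀ k, prefixSum x k ≤ prefixSum y k) : F x ≤ F y := by
  induction hd : #{i | x i ≠ y i} using Nat.strong_induction_on generalizing y with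
  | _ d ih =>
    by_cases hxy : x = y
    · rw [hxy]
    obtain ⟨a, b, hab, ha, hb, hmid⟩ := exists_transfer_indices (hx.2.trans hy.2.symm) h hxy
    set δ := min (y a - x a) (x b - y b)
    have hδ : 0 < δ := lt_min (by linarith) (by linarith)
    have hδa : δ ≤ y a - x a := min_le_left _ _
    have hδb : δ ≤ x b - y b := min_le_right _ _
    have hy' := isCountingVector_transfer hx hy hab.ne hδ.le hδa
    calc F x ≤ F (transfer y a b δ) :=
          ih _ (hd ▸ card_ne_transfer_lt hab.ne ha hb) hy'
            (antitone_transfer hxa hya hab hδ.le hδa hδb hmid)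
            (prefixSum_le_transfer h hab hδa hmid) rfl
      _ ≤ F y := by
          have hle := hF _ hy' b a hab.ne' (by
            rw [transfer_apply_left hab.ne, transfer_apply_right hab.ne]
            linarith [hxa hab.le]) δ hδ
            (by rw [transfer_apply_right hab.ne]; linarith [hy.1 b])
            (by rw [transfer_apply_left hab.ne]; linarith [hy.apply_le a])
          rwa [update_update_eq_transfer _ hab.ne', transfer_transfer] at hle

lemma exists_perm_antitone (v : Fin n → ℝ) : ∃ σ : Equiv.Perm (Fin n), Antitone (v ∘ σ) :=
  ⟨Fin.revPerm.trans (Tuple.sort v), fun i j (hij : i ≤ j) =>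
    Tuple.monotone_sort v (Fin.rev_le_rev.2 hij)⟩

lemma prefixSum_le_add_sum_max_sub (v : Fin n → ℝ) (c : ℝ) (k : ℕ) :
    prefixSum v k ≤ ∑ i : Fin n with i.val < k, c + ∑ i, max (v i - c) 0 :=
  calc prefixSum v k ≤ ∑ i : Fin n with i.val < k, (c + max (v i - c) 0) :=
        sum_le_sum fun i _ => by linarith [le_max_left (v i - c) 0]
    _ ≤ _ := by
        rw [sum_add_distrib]
        exact add_le_add_right (sum_le_sum_of_subset_of_nonneg
          (filter_subset (fun i : Fin n => i.val < k) univ) fun i _ _ => le_max_right _ _) _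

lemma prefixSum_eq_of_antitone {v : Fin n → ℝ} (hv : Antitone v) {k : ℕ} (hk : k < n) :
    prefixSum v k = ∑ i : Fin n with i.val < k, v ⟨k, hk⟩ + ∑ i, max (v i - v ⟨k, hk⟩) 0 := by
  have hmax : ∀ i, max (v i - v ⟨k, hk⟩) 0 = if i.val < k then v i - v ⟨k, hk⟩ else 0 := by
    intro i
    split_ifs with hik
    · exact max_eq_left (sub_nonneg.2 (hv (Fin.le_def.2 hik.le)))
    · exact max_eq_right (sub_nonpos.2 (hv (Fin.le_def.2 (not_lt.1 hik))))
  simp only [hmax, ← sum_filter, ← sum_add_distrib, add_sub_cancel]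
  rfl

lemma prefixSum_le_of_sum_max_sub_le {x y : Fin n → ℝ} (hx : IsCountingVector x)
    (hy : IsCountingVector y) (hya : Antitone y)
    (h : ∀ c, 0 ≤ c → ∑ i, max (x i - c) 0 ≤ ∑ i, max (y i - c) 0) (k : ℕ) :
    prefixSum x k ≤ prefixSum y k := by
  by_cases hk : k < n
  · rw [prefixSum_eq_of_antitone hya hk]
    linarith [prefixSum_le_add_sum_max_sub x (y ⟨k, hk⟩) k, h _ (hy.1 ⟨k, hk⟩)]
  · rw [prefixSum_of_le _ (not_lt.1 hk), prefixSum_of_le _ (not_lt.1 hk), hx.2, hy.2]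

theorem CumulationMonotone.le_of_sum_max_sub_le (hF : CumulationMonotone F)
    (hS : PermInvariant F) {x y : Fin n → ℝ} (hx : IsCountingVector x) (hy : IsCountingVector y)
    (h : ∀ c, 0 ≤ c → ∑ i, max (x i - c) 0 ≤ ∑ i, max (y i - c) 0) : F x ≤ F y := by
  obtain ⟨σ, hσ⟩ := exists_perm_antitone x
  obtain ⟨τ, hτ⟩ := exists_perm_antitone y
  rw [← hS x hx σ, ← hS y hy τ]
  refine hF.le_of_prefixSum_le (hx.comp_perm σ) hσ (hy.comp_perm τ) hτ
    (prefixSum_le_of_sum_max_sub_le (hx.comp_perm σ) (hy.comp_perm τ) hτ fun c hc => ?_)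
  simpa only [comp_apply, Equiv.sum_comp σ fun i => max (x i - c) 0,
    Equiv.sum_comp τ fun i => max (y i - c) 0] using h c hc

end Majorization

section Values

lemma apply_comp_cast (M : ∀ n : ℕ, (Fin n → ℝ) → ℝ) {m n : ℕ} (h : m = n) (v : Fin n → ℝ) :
    M m (v ∘ Fin.cast h) = M n v := by
  subst h
  rfl

lemma append_one_one (m n : ℕ) : Fin.append (1 : Fin m → ℝ) (1 : Fin n → ℝ) = 1 := by
  ext i
  induction i using Fin.addCases <;> simp

variable {M : ∀ n : ℕ, (Fin n → ℝ) → ℝ} (hM : IsCoENF M)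
include hM

lemma IsCoENF.le_of_sum_max_sub_le {m n : ℕ} (h : m = n) {x : Fin m → ℝ} {y : Fin n → ℝ}
    (hx : IsCountingVector x) (hy : IsCountingVector y)
    (hc : ∀ c, 0 ≤ c → ∑ i, max (x i - c) 0 ≤ ∑ i, max (y i - c) 0) : M m x ≤ M n y := by
  subst h
  exact CumulationMonotone.le_of_sum_max_sub_le (hM.2.2.2.1 m) (hM.2.1 m) hx hy hc

lemma IsCoENF.apply_append {m n : ℕ} {u : Fin m → ℝ} {v : Fin n → ℝ} (hu : IsCountingVector u)
    (hv : IsCountingVector v) : M (m + n) (Fin.append u v) = M m u + M n v :=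
  hM.1 m n u v hu hv

lemma IsCoENF.apply_fin_zero (v : Fin 0 → ℝ) : M 0 v = 0 := by
  have hv : IsCountingVector v := ⟨fun i => i.elim0, by simp⟩
  have h : M 0 v = M 0 v + M 0 v := by
    convert hM.apply_append hv hv using 2
  linarith

lemma IsCoENF.apply_spike (n : ℕ) : M (n + 1) (spike n) = n :=
  hM.2.2.2.2 n

lemma IsCoENF.apply_one (m : ℕ) : M m 1 = 0 := by
  induction m with
  | zero => exact hM.apply_fin_zero _
  | succ m ih =>
    have h1 : M 1 1 = 0 := by
      convert hM.apply_spike 0 using 2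
      · ext k
        simp [spike, Subsingleton.elim k 0]
      · simp
    rw [← append_one_one, hM.apply_append (isCountingVector_one m) (isCountingVector_one 1), ih, h1,
      add_zero]

lemma IsCoENF.apply_repeat {n : ℕ} {v : Fin n → ℝ} (hv : IsCountingVector v) (L : ℕ) :
    M (L * n) (Fin.repeat L v) = L * M n v := by
  induction L with
  | zero =>
    rw [← apply_comp_cast M (Nat.zero_mul n).symm, hM.apply_fin_zero, Nat.cast_zero, zero_mul]
  | succ L ih =>
    rw [Fin.repeat_succ, apply_comp_cast M, hM.apply_append hv (hv.repeat L), ih]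
    push_cast
    ring

end Values

section LowerBound

lemma sum_sub_le_sum_max_sub {n : ℕ} (P : Fin n → ℝ) (c : ℝ) :
    ∑ i, P i - c * (n - #{i | P i = 0}) ≤ ∑ i, max (P i - c) 0 := by
  calc ∑ i, P i - c * (n - #{i | P i = 0})
      = ∑ i, (P i - c + c * if P i = 0 then 1 else 0) := by
        simp only [sum_add_distrib, sum_sub_distrib, ← mul_sum, sum_boole, sum_const, card_univ,
          Fintype.card_fin, nsmul_eq_mul]
        ring
    _ ≤ ∑ i, max (P i - c) 0 := sum_le_sum fun i _ => by
        split_ifs with h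
        · simp [h]
        · simp

/-- `P`, padded by `2 z` ones and a spike of height `N + 2`, majorizes `z + N + 1` copies of
`(2, 0)`, where `z` is the number of zeros of `P`. -/
theorem IsCoENF.card_zeros_le {M : ∀ n : ℕ, (Fin n → ℝ) → ℝ} (hM : IsCoENF M) {N : ℕ}
    {P : Fin N → ℝ} (hP : IsCountingVector P) : (#{i | P i = 0} : ℝ) ≤ M N P := by
  set z := #{i | P i = 0}
  have hV := (hP.append (isCountingVector_one (2 * z))).append (isCountingVector_spike (N + 1))
  have hT := (isCountingVector_spike 1).repeat (z + N + 1)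
  have key := hM.le_of_sum_max_sub_le (by ring) hT hV fun c hc => by
    rw [sum_comp_repeat (fun x => max (x - c) 0), sum_comp_spike (fun x => max (x - c) 0),
      sum_comp_append (fun x => max (x - c) 0), sum_comp_append (fun x => max (x - c) 0),
      sum_comp_spike (fun x => max (x - c) 0)]
    simp only [Pi.one_apply, sum_const, card_univ, Fintype.card_fin, nsmul_eq_mul]
    push_cast
    have hS := sum_sub_le_sum_max_sub P c
    rw [hP.2] at hS
    have h1 : 2 * (z : ℝ) * (1 - c) ≤ 2 * z * max (1 - c) 0 :=
      mul_le_mul_of_nonneg_left (le_max_left _ _) (by positivity)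
    have h2 := le_max_left ((N : ℝ) + 1 + 1 - c) 0
    have h3 : 0 ≤ 2 * (z : ℝ) * max (1 - c) 0 := by positivity
    rw [max_eq_right (by linarith : 0 - c ≤ 0)]
    rcases le_total c 2 with hc2 | hc2
    · rw [max_eq_left (by linarith : 0 ≤ 1 + 1 - c)]
      linarith
    · rw [max_eq_right (by linarith : 1 + 1 - c ≤ 0)]
      have := sum_nonneg fun i (_ : i ∈ univ) => le_max_right (P i - c) 0
      linarith [le_max_right ((N : ℝ) + 1 + 1 - c) 0]
  rw [hM.apply_repeat (isCountingVector_spike 1), hM.apply_spike,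
    hM.apply_append (hP.append (isCountingVector_one _)) (isCountingVector_spike _),
    hM.apply_append hP (isCountingVector_one _), hM.apply_one, hM.apply_spike] at key
  push_cast at key
  linarith

end LowerBound

section UpperBound

lemma max_sub_le_of_le_one {p c : ℝ} (hp : 0 ≤ p) (hc0 : 0 ≤ c) (hc1 : c ≤ 1) :
    max (p - c) 0 ≤ (1 - c) * p + c * max (p - 1) 0 := by
  rcases le_total 1 p with h | h
  · rw [max_eq_left (by linarith), max_eq_left (by linarith)]
    linarith
  · rw [max_eq_right (by linarith : p - 1 ≤ 0)]
    exact max_le (by nlinarith) (by positivity)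

lemma mul_max_sub_le {p c N : ℝ} (hpN : p ≤ N) (hc : 1 ≤ c) :
    N * max (p - c) 0 ≤ max (N + 1 - c) 0 * max (p - 1) 0 := by
  rcases le_total p c with h | h
  · rw [max_eq_right (by linarith : p - c ≤ 0), mul_zero]
    positivity
  · rw [max_eq_left (by linarith : 0 ≤ p - c), max_eq_left (by linarith : 0 ≤ N + 1 - c),
      max_eq_left (by linarith : 0 ≤ p - 1)]
    nlinarith

lemma sum_max_sub_one_eq {N : ℕ} {P : Fin N → ℝ} (hP : IsCountingVector P) :
    ∑ i, max (P i - 1) 0 = ∑ i, max (1 - P i) 0 := by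
  have h : ∀ i, max (P i - 1) 0 = max (1 - P i) 0 + (P i - 1) := fun i => by
    rcases le_total (P i) 1 with h | h
    · rw [max_eq_right (by linarith), max_eq_left (by linarith)]
      ring
    · rw [max_eq_left (by linarith), max_eq_right (by linarith)]
      ring
  simp [h, sum_add_distrib, hP.2]

/-- `L` copies of `P`, padded by ones, are majorized by `t` spikes of height `N + 1`, padded by
ones, as soon as the spikes carry the excess `L * ∑ (P i - 1)⁺` of the copies. -/
theorem IsCoENF.mul_le_of_excess_le {M : ∀ n : ℕ, (Fin n → ℝ) → ℝ} (hM : IsCoENF M) {N : ℕ}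
    (hN : 0 < N) {P : Fin N → ℝ} (hP : IsCountingVector P) {L t : ℕ}
    (ht : L * ∑ i, max (P i - 1) 0 ≤ t * N) : L * M N P ≤ t * N := by
  set E := ∑ i, max (P i - 1) 0
  have hV := (hP.repeat L).append (isCountingVector_one (t * (N + 1)))
  have hT := ((isCountingVector_spike N).repeat t).append (isCountingVector_one (L * N))
  have key := hM.le_of_sum_max_sub_le (by ring) hV hT fun c hc => by
    rw [sum_comp_append (fun x => max (x - c) 0), sum_comp_append (fun x => max (x - c) 0),
      sum_comp_repeat (fun x => max (x - c) 0), sum_comp_repeat (fun x => max (x - c) 0),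
      sum_comp_spike (fun x => max (x - c) 0)]
    simp only [Pi.one_apply, sum_const, card_univ, Fintype.card_fin, nsmul_eq_mul]
    push_cast
    rw [max_eq_right (by linarith : 0 - c ≤ 0), mul_zero, add_zero]
    set S := ∑ i, max (P i - c) 0
    rcases le_total c 1 with hc1 | hc1
    · have hS : S ≤ (1 - c) * N + c * E := by
        calc S ≤ ∑ i, ((1 - c) * P i + c * max (P i - 1) 0) :=
              sum_le_sum fun i _ => max_sub_le_of_le_one (hP.1 i) hc hc1
          _ = (1 - c) * N + c * E := by rw [sum_add_distrib, ← mul_sum, ← mul_sum, hP.2]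
      rw [max_eq_left (by linarith : 0 ≤ 1 - c), max_eq_left (by linarith : 0 ≤ (N : ℝ) + 1 - c)]
      have h1 : (L : ℝ) * S ≤ L * ((1 - c) * N + c * E) := by gcongr
      have h2 : c * (L * E) ≤ c * (t * N) := by gcongr
      linarith
    · rw [max_eq_right (by linarith : 1 - c ≤ 0), mul_zero, mul_zero, add_zero, add_zero]
      set m := max ((N : ℝ) + 1 - c) 0
      have hS : N * S ≤ m * E := by
        rw [mul_sum, mul_sum]
        exact sum_le_sum fun i _ => mul_max_sub_le (hP.apply_le i) hc1
      have h1 : (L : ℝ) * (N * S) ≤ L * (m * E) := by gcongr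
      have h2 : m * (L * E) ≤ m * (t * N) := by gcongr
      refine le_of_mul_le_mul_left ?_ (Nat.cast_pos.2 hN : (0 : ℝ) < N)
      linarith
  rw [hM.apply_append (hP.repeat L) (isCountingVector_one _),
    hM.apply_append ((isCountingVector_spike N).repeat t) (isCountingVector_one _),
    hM.apply_repeat hP, hM.apply_repeat (isCountingVector_spike N), hM.apply_spike, hM.apply_one,
    hM.apply_one, add_zero, add_zero] at key
  exact key

lemma le_of_forall_nat_mul_lt {a b C : ℝ} (h : ∀ L : ℕ, L * a < L * b + C) : a ≤ b := by
  by_contra! hab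
  obtain ⟨L, hL⟩ := exists_nat_gt (C / (a - b))
  rw [div_lt_iff₀ (sub_pos.2 hab)] at hL
  linarith [h L]

theorem IsCoENF.apply_le_sum_max_one_sub {M : ∀ n : ℕ, (Fin n → ℝ) → ℝ} (hM : IsCoENF M)
    {N : ℕ} {P : Fin N → ℝ} (hP : IsCountingVector P) : M N P ≤ ∑ i, max (1 - P i) 0 := by
  rcases Nat.eq_zero_or_pos N with rfl | hN
  · simp [hM.apply_fin_zero]
  rw [← sum_max_sub_one_eq hP]
  set E := ∑ i, max (P i - 1) 0
  have hNpos : (0 : ℝ) < N := Nat.cast_pos.2 hN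
  refine le_of_forall_nat_mul_lt (C := N) fun L => ?_
  have hE : 0 ≤ L * E / N := by positivity
  calc L * M N P ≤ ⌈L * E / N⌉₊ * N :=
        hM.mul_le_of_excess_le hN hP ((div_le_iff₀ hNpos).1 (Nat.le_ceil _))
    _ < (L * E / N + 1) * N := mul_lt_mul_of_pos_right (Nat.ceil_lt_add_one hE) hNpos
    _ = L * E + N := by field_simp

end UpperBound

lemma card_zeros_eq_sum_max_one_sub_iff {N : ℕ} {P : Fin N → ℝ} (hP : ∀ i, 0 ≤ P i) :
    (#{i | P i = 0} : ℝ) = ∑ i, max (1 - P i) 0 ↔ ∀ i, P i ∉ Set.Ioo 0 1 := by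
  have hle : ∀ p : ℝ, (if p = 0 then 1 else 0 : ℝ) ≤ max (1 - p) 0 := fun p => by
    split_ifs with h
    · simp [h]
    · exact le_max_right _ _
  have heq : ∀ p : ℝ, 0 ≤ p → ((if p = 0 then 1 else 0 : ℝ) = max (1 - p) 0 ↔ p ∉ Set.Ioo 0 1) := by
    intro p hp
    rcases hp.eq_or_lt with rfl | hp
    · simp
    · simp [hp.ne', hp, eq_comm (a := (0 : ℝ))]
  rw [natCast_card_filter, sum_eq_sum_iff_of_le fun i _ => hle (P i)]
  simp [heq _ (hP _)]

section Generated

lemma ConvexOn.add_le_add_sub_add {m : ℝ → ℝ} (hm : ConvexOn ℝ (Set.Ici 0) m) {x y ε : ℝ}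
    (hεx : ε ≤ x) (hxy : x ≤ y) (hε : 0 < ε) : m x + m y ≤ m (x - ε) + m (y + ε) := by
  have hd : 0 < y - x + 2 * ε := by linarith
  set θ := (y + ε - x) / (y - x + 2 * ε)
  have hθ : θ * (y - x + 2 * ε) = y + ε - x := div_mul_cancel₀ _ hd.ne'
  have hθ0 : 0 ≤ θ := div_nonneg (by linarith) hd.le
  have hθ1 : 0 ≤ 1 - θ := by
    rw [sub_nonneg, div_le_one hd]
    linarith
  have ha : x - ε ∈ Set.Ici (0 : ℝ) := sub_nonneg.2 hεx
  have hb : y + ε ∈ Set.Ici (0 : ℝ) := by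
    simp only [Set.mem_Ici]
    linarith
  have hx : θ * (x - ε) + (1 - θ) * (y + ε) = x := by linear_combination -hθ
  have hy : (1 - θ) * (x - ε) + θ * (y + ε) = y := by linear_combination hθ
  have h1 := hm.2 ha hb hθ0 hθ1 (add_sub_cancel θ 1)
  have h2 := hm.2 ha hb hθ1 hθ0 (sub_add_cancel 1 θ)
  simp only [smul_eq_mul, hx, hy] at h1 h2
  linarith

theorem isCoENF_sum_comp {m : ℝ → ℝ} (hcont : ContinuousOn m (Set.Ici 0))
    (hconv : ConvexOn ℝ (Set.Ici 0) m) (h0 : m 0 = 1) (h1 : ∀ x, 1 ≤ x → m x = 0) :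
    IsCoENF fun n (v : Fin n → ℝ) => ∑ i, m (v i) := by
  refine ⟨fun n k p q _ _ => sum_comp_append m p q, fun n p _ σ => Equiv.sum_comp σ (m ∘ p),
    fun n => ?_, fun n p _ i j hij hpij ε hε hεi _ => ?_, fun n => ?_⟩
  · exact continuousOn_finsetSum _ fun i _ =>
      hcont.comp (continuous_apply i).continuousOn fun P hP => hP.1 i
  · rw [update_update_eq_transfer p hij, ← sub_nonneg, ← sum_sub_distrib,
      Fintype.sum_eq_add i j hij fun k hk => by rw [transfer_apply_of_ne hk.1 hk.2, sub_self],
      transfer_apply_left hij, transfer_apply_right hij]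
    linarith [hconv.add_le_add_sub_add hεi hpij hε]
  · change ∑ i, m (spike n i) = n
    rw [sum_comp_spike, h1 _ (by simp), h0]
    ring

noncomputable def hinge (δ x : ℝ) : ℝ := max (1 - x / δ) 0

lemma continuous_hinge (δ : ℝ) : Continuous (hinge δ) :=
  (continuous_const.sub (continuous_id.div_const δ)).max continuous_const

lemma convexOn_hinge (δ : ℝ) : ConvexOn ℝ Set.univ (hinge δ) := by
  refine ConvexOn.sup ⟨convex_univ, fun x _ y _ a b _ _ hab => le_of_eq ?_⟩
    (convexOn_const 0 convex_univ)
  simp only [smul_eq_mul]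
  linear_combination -hab

lemma hinge_zero (δ : ℝ) : hinge δ 0 = 1 := by simp [hinge]

lemma hinge_one (x : ℝ) : hinge 1 x = max (1 - x) 0 := by simp [hinge]

lemma hinge_eq_zero {δ x : ℝ} (hδ : 0 < δ) (hx : δ ≤ x) : hinge δ x = 0 :=
  max_eq_right (by rw [sub_nonpos, one_le_div hδ]; exact hx)

lemma exists_pos_le_pos_entries {n : ℕ} (P : Fin n → ℝ) :
    ∃ δ, 0 < δ ∧ δ ≤ 1 ∧ ∀ i, 0 < P i → δ ≤ P i := by
  set s := insert 1 ((univ.filter fun i => 0 < P i).image P)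
  refine ⟨s.min' (insert_nonempty _ _), ?_, s.min'_le _ (mem_insert_self _ _),
    fun i hi => s.min'_le _ (mem_insert_of_mem (mem_image_of_mem _ (by simpa using hi)))⟩
  obtain h | ⟨i, hi, h⟩ := by simpa [s] using s.min'_mem (insert_nonempty _ _)
  · rw [h]
    exact one_pos
  · rw [← h]
    simpa using hi

theorem exists_isCoENF_apply_eq {N : ℕ} {P : Fin N → ℝ} (hP : IsCountingVector P) {y : ℝ}
    (hy : y ∈ Set.Icc (#{i | P i = 0} : ℝ) (∑ i, max (1 - P i) 0)) :
    ∃ M : ∀ n : ℕ, (Fin n → ℝ) → ℝ, IsCoENF M ∧ M N P = y := by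
  obtain ⟨δ, hδ0, hδ1, hδP⟩ := exists_pos_le_pos_entries P
  rw [← segment_eq_Icc (hy.1.trans hy.2)] at hy
  obtain ⟨a, b, ha, hb, hab, rfl⟩ := hy
  set m := a • hinge δ + b • hinge 1
  have hm : IsCoENF fun n (v : Fin n → ℝ) => ∑ i, m (v i) := by
    refine isCoENF_sum_comp ((((continuous_hinge δ).const_smul a).add
      ((continuous_hinge 1).const_smul b)).continuousOn) ((((convexOn_hinge δ).smul ha).add
      ((convexOn_hinge 1).smul hb)).subset (Set.subset_univ _) (convex_Ici 0)) ?_ fun x hx => ?_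
    · simp [m, hinge_zero, hab]
    · simp [m, hinge_eq_zero hδ0 (hδ1.trans hx), hinge_eq_zero one_pos hx]
  refine ⟨_, hm, ?_⟩
  have hzeros : ∑ i, hinge δ (P i) = #{i | P i = 0} := by
    rw [natCast_card_filter]
    refine sum_congr rfl fun i _ => ?_
    split_ifs with h
    · rw [h, hinge_zero]
    · exact hinge_eq_zero hδ0 (hδP i (lt_of_le_of_ne (hP.1 i) (Ne.symm h)))
  simp [m, sum_add_distrib, ← mul_sum, hzeros, hinge_one]

end Generated

open scoped Classical in
theorem coENF_value_range (N : ℕ) (P : Fin N → ℝ) (hP : IsCountingVector P)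
    (β₀ β₁ : ℝ)
    (hβ₀ : β₀ = ((Finset.univ.filter (fun i => P i = 0)).card : ℝ))
    (hβ₁ : β₁ = ∑ i, max (1 - P i) 0) :
    -- (i) all co-ENF values at P lie in [β₀, β₁]
    (∀ M : ∀ n : ℕ, (Fin n → ℝ) → ℝ, IsCoENF M → M N P ∈ Set.Icc β₀ β₁) ∧
    -- (ii) β₀ = β₁ iff no entry of P lies in (0,1)
    (β₀ = β₁ ↔ ∀ i, P i ∉ Set.Ioo (0 : ℝ) 1) ∧
    -- (iii) if β₀ < β₁ then every value in [β₀, β₁] is attained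
    (β₀ < β₁ →
      {y : ℝ | ∃ M : ∀ n : ℕ, (Fin n → ℝ) → ℝ, IsCoENF M ∧ M N P = y}
        = Set.Icc β₀ β₁) := by
  subst hβ₀ hβ₁
  have hrange : ∀ M : ∀ n : ℕ, (Fin n → ℝ) → ℝ, IsCoENF M → M N P ∈ Set.Icc _ _ :=
    fun M hM => ⟨hM.card_zeros_le hP, hM.apply_le_sum_max_one_sub hP⟩
  refine ⟨hrange, card_zeros_eq_sum_max_one_sub_iff hP.1, fun _ => Set.ext fun y => ?_⟩
  exact ⟨fun ⟨M, hM, hMy⟩ => hMy ▸ hrange M hM, exists_isCoENF_apply_eq hP⟩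
end
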